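/- arXiv:2409.10559 — 7 statements merged into one kernel-verified Lean document; each statement's English description precedes it below -/
import Mathlib

section
/- Assume L/2 ≥ M ≥ r and L ≥ M + 1. Fix a subset S ⊆ {1,…,M} and, for M+1 ≤ l ≤ L+1, let Y_l = (x_l, (x_{l−s})_{s∈S}) ∈ 𝒳^{1+|S|} be the corresponding window of the chain of length L+1; let ν denote the marginal of the stationary window distribution μ̄ on the coordinates (x_{M+1}, (x_{M+1−s})_{s∈S}). Then: (i) ‖ (L−M)^{−1} Σ_{l=M+1}^{L} p(Y_l = ·) − ν ‖_TV ≤ 2√(D₀+1) / (L(1−λ)); and (ii) ‖ p(Y_{L+1} = ·) − ν ‖_TV ≤ λ^{L−M} · √(D₀+1). -/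
/-!
Summing out the first token of a chain of length `T + 1` started from `ρ` leaves a chain of
length `T` started from `P_π ρ`, and summing out trailing tokens is free because `π` is
stochastic. Hence, for `l ≥ M`, the law of `Y_{l+1}` is the image of `P_π^{l-M} μ₀` under one
fixed Markov kernel, while `ν` is the image of `μ`. Such a kernel does not increase total
variation, and Cauchy–Schwarz gives `TV(σ, μ) ≤ √χ²(σ ‖ μ) / 2`. Writing `v = (σ - μ)/√μ`, one
has `χ²(σ ‖ μ) = ‖v‖²` and `(P_π σ - μ)/√μ = (K - √μ√μᵀ) v` since `v ⊥ √μ`, so `χ²` contracts by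
`λ²` at each step. Part (ii) follows, and averaging the geometric bounds gives (i), using
`L ≤ 2 (L - M)`.
-/

open Finset

/-- Probability of the full sequence `x` (tokens indexed `0,…,T-1`, i.e. `x_1,…,x_T`)
under the `n`-gram Markov chain with parent offsets `r`, transition kernel `pk`,
and initial distribution `init` on the first `R` tokens. -/
noncomputable def ngramProb (d n R T : ℕ) (r : Fin n → ℕ)
    (pk : (Fin n → Fin d) → Fin d → ℝ) (init : (Fin R → Fin d) → ℝ)
    (hRT : R ≤ T) (x : Fin T → Fin d) : ℝ :=
  init (fun i => x ⟨i.1, lt_of_lt_of_le i.2 hRT⟩) *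
    ∏ l ∈ (Finset.Ico R T).attach,
      pk (fun k => x ⟨l.1 - r k, lt_of_le_of_lt (Nat.sub_le _ _) (Finset.mem_Ico.mp l.2).2⟩)
        (x ⟨l.1, (Finset.mem_Ico.mp l.2).2⟩)

/-- The window transition matrix `P_π` on `𝒳^R` of the `n`-gram chain:
`P(Z', Z) = π(z'_R | Z parents) · 1{Z' is the shift of Z}`. -/
noncomputable def windowMatrix (d n R : ℕ) (hR : 0 < R) (r : Fin n → ℕ)
    (hrpos : ∀ k, 0 < r k) (pk : (Fin n → Fin d) → Fin d → ℝ) :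
    Matrix (Fin R → Fin d) (Fin R → Fin d) ℝ :=
  Matrix.of fun Z' Z =>
    if ∀ j : Fin (R - 1),
        Z' ⟨j.1, lt_of_lt_of_le j.2 (Nat.sub_le R 1)⟩ = Z ⟨j.1 + 1, by have := j.2; omega⟩ then
      pk (fun k => Z ⟨R - r k, Nat.sub_lt hR (hrpos k)⟩) (Z' ⟨R - 1, Nat.sub_lt hR Nat.one_pos⟩)
    else 0

/-- The matrix `K - √μ (√μ)ᵀ` where `K = diag(√μ)⁻¹ P_π diag(√μ)`. -/
noncomputable def specA (d n R : ℕ) (hR : 0 < R) (r : Fin n → ℕ) (hrpos : ∀ k, 0 < r k)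
    (pk : (Fin n → Fin d) → Fin d → ℝ) (μ : (Fin R → Fin d) → ℝ) :
    Matrix (Fin R → Fin d) (Fin R → Fin d) ℝ :=
  (Matrix.diagonal fun Z => (Real.sqrt (μ Z))⁻¹) * windowMatrix d n R hR r hrpos pk *
      (Matrix.diagonal fun Z => Real.sqrt (μ Z)) -
    Matrix.vecMulVec (fun Z => Real.sqrt (μ Z)) (fun Z => Real.sqrt (μ Z))

/-- The tuple `(x_{l0-s})_{s ∈ S}` of tokens at offsets `S` before position `l0` (0-based). -/
def parents (d T : ℕ) (S : Finset ℕ) (x : Fin T → Fin d) (l0 : ℕ) (hl : l0 < T) :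
    {s // s ∈ S} → Fin d :=
  fun s => x ⟨l0 - s.1, lt_of_le_of_lt (Nat.sub_le _ _) hl⟩

/-- The window `Y_{l0} = (x_{l0}, (x_{l0-s})_{s ∈ S})` (0-based position `l0`). -/
def window (d T : ℕ) (S : Finset ℕ) (x : Fin T → Fin d) (l0 : ℕ) (hl : l0 < T) :
    Fin d × ({s // s ∈ S} → Fin d) :=
  (x ⟨l0, hl⟩, parents d T S x l0 hl)

/-- The law of the window `Y_{l0}` when the full sequence is distributed as `q`. -/
noncomputable def windowLaw (d T : ℕ) (S : Finset ℕ) (q : (Fin T → Fin d) → ℝ)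
    (l0 : ℕ) (hl : l0 < T) (w : Fin d × ({s // s ∈ S} → Fin d)) : ℝ :=
  ∑ x : Fin T → Fin d, if window d T S x l0 hl = w then q x else 0

/-- Total variation distance: half the ℓ₁ distance. -/
noncomputable def tvDist {α : Type*} [Fintype α] (p q : α → ℝ) : ℝ :=
  (∑ w, |p w - q w|) / 2

/-- χ²-divergence `D_{χ²}(p ‖ q) = Σ_ω (p ω - q ω)² / q ω`. -/
noncomputable def chiSq {α : Type*} [Fintype α] (p q : α → ℝ) : ℝ :=
  ∑ w, (p w - q w) ^ 2 / q w

theorem icoLtSucc {M L : ℕ} (l : {m // m ∈ Finset.Ico M L}) : l.1 < L + 1 :=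
  Nat.lt_succ_of_lt (Finset.mem_Ico.mp l.2).2


open scoped Matrix

section ChiSquare

variable {ι : Type*} [Fintype ι]

lemma chiSq_nonneg (p : ι → ℝ) {q : ι → ℝ} (hq : ∀ i, 0 ≤ q i) : 0 ≤ chiSq p q :=
  sum_nonneg fun i _ => div_nonneg (sq_nonneg _) (hq i)

lemma chiSq_eq_sum_sq (p : ι → ℝ) {q : ι → ℝ} (hq : ∀ i, 0 ≤ q i) :
    chiSq p q = ∑ i, ((p i - q i) / √(q i)) ^ 2 :=
  sum_congr rfl fun i _ => by rw [div_pow, Real.sq_sqrt (hq i)]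

lemma tvDist_le_sqrt_chiSq (p : ι → ℝ) {q : ι → ℝ} (hq : ∀ i, 0 < q i) (hq1 : ∑ i, q i = 1) :
    tvDist p q ≤ √(chiSq p q) / 2 := by
  unfold tvDist
  gcongr
  rw [Real.le_sqrt (sum_nonneg fun i _ => abs_nonneg _) (chiSq_nonneg p fun i => (hq i).le)]
  simpa [chiSq, hq1, sq_abs] using
    sq_sum_div_le_sum_sq_div univ (fun i => |p i - q i|) fun i _ => hq i

lemma sum_iterate_mulVec {P : Matrix ι ι ℝ} (hP : ∀ v, ∑ i, (P *ᵥ v) i = ∑ i, v i)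
    (σ : ι → ℝ) (t : ℕ) : ∑ i, (P *ᵥ ·)^[t] σ i = ∑ i, σ i := by
  induction t with
  | zero => rfl
  | succ t ih => rw [Function.iterate_succ_apply', hP, ih]

variable [DecidableEq ι]

lemma sqrt_chiSq_mulVec_le {P : Matrix ι ι ℝ} {μ : ι → ℝ} (hμ : ∀ i, 0 < μ i)
    (hμ1 : ∑ i, μ i = 1) (hstat : P *ᵥ μ = μ) {lam : ℝ}
    (hop : ∀ v : ι → ℝ,
      √(∑ i, ((Matrix.diagonal (fun i => (√(μ i))⁻¹) * P * Matrix.diagonal (fun i => √(μ i)) -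
        Matrix.vecMulVec (fun i => √(μ i)) (fun i => √(μ i))) *ᵥ v) i ^ 2) ≤
        lam * √(∑ i, v i ^ 2))
    {σ : ι → ℝ} (hσ : ∑ i, σ i = 1) :
    √(chiSq (P *ᵥ σ) μ) ≤ lam * √(chiSq σ μ) := by
  have hsqrt : ∀ i, √(μ i) ≠ 0 := fun i => (Real.sqrt_pos.2 (hμ i)).ne'
  set v : ι → ℝ := fun i => (σ i - μ i) / √(μ i)
  have hDv : Matrix.diagonal (fun i => √(μ i)) *ᵥ v = σ - μ := by
    ext i
    simp [v, Matrix.mulVec_diagonal, mul_div_cancel₀ _ (hsqrt i)]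
  have hperp : (fun i => √(μ i)) ⬝ᵥ v = 0 := by
    simp [v, dotProduct, mul_div_cancel₀ _ (hsqrt _), sum_sub_distrib, hσ, hμ1]
  have hAv : (Matrix.diagonal (fun i => (√(μ i))⁻¹) * P * Matrix.diagonal (fun i => √(μ i)) -
      Matrix.vecMulVec (fun i => √(μ i)) (fun i => √(μ i))) *ᵥ v =
      fun i => ((P *ᵥ σ) i - μ i) / √(μ i) := by
    rw [Matrix.sub_mulVec, Matrix.vecMulVec_mulVec, hperp, ← Matrix.mulVec_mulVec,
      ← Matrix.mulVec_mulVec, hDv, Matrix.mulVec_sub, hstat]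
    ext i
    simp [Matrix.mulVec_diagonal, div_eq_inv_mul]
  have h := hop v
  rwa [hAv, ← chiSq_eq_sum_sq _ fun i => (hμ i).le, ← chiSq_eq_sum_sq _ fun i => (hμ i).le] at h

lemma sqrt_chiSq_iterate_mulVec_le {P : Matrix ι ι ℝ} {μ : ι → ℝ} (hμ : ∀ i, 0 < μ i)
    (hμ1 : ∑ i, μ i = 1) (hstat : P *ᵥ μ = μ) (hP : ∀ v, ∑ i, (P *ᵥ v) i = ∑ i, v i)
    {lam : ℝ} (hlam : 0 ≤ lam)
    (hop : ∀ v : ι → ℝ,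
      √(∑ i, ((Matrix.diagonal (fun i => (√(μ i))⁻¹) * P * Matrix.diagonal (fun i => √(μ i)) -
        Matrix.vecMulVec (fun i => √(μ i)) (fun i => √(μ i))) *ᵥ v) i ^ 2) ≤
        lam * √(∑ i, v i ^ 2))
    {σ : ι → ℝ} (hσ : ∑ i, σ i = 1) (t : ℕ) :
    √(chiSq ((P *ᵥ ·)^[t] σ) μ) ≤ lam ^ t * √(chiSq σ μ) := by
  induction t with
  | zero => simp
  | succ t ih =>
    rw [Function.iterate_succ_apply', pow_succ', mul_assoc]
    calc √(chiSq (P *ᵥ (P *ᵥ ·)^[t] σ) μ) ≤ lam * √(chiSq ((P *ᵥ ·)^[t] σ) μ) :=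
          sqrt_chiSq_mulVec_le hμ hμ1 hstat hop ((sum_iterate_mulVec hP σ t).trans hσ)
      _ ≤ lam * (lam ^ t * √(chiSq σ μ)) := by gcongr

end ChiSquare

section TotalVariation

variable {ι α : Type*} [Fintype α]

lemma tvDist_average_le (s : Finset ι) (hs : s.Nonempty) (p : ι → α → ℝ) (ν : α → ℝ) :
    tvDist (fun w => (∑ i ∈ s, p i w) / #s) ν ≤ (∑ i ∈ s, tvDist (p i) ν) / #s := by
  have hcard : (0 : ℝ) < #s := by exact_mod_cast hs.card_pos
  have hsub : ∀ w, (∑ i ∈ s, p i w) / #s - ν w = (∑ i ∈ s, (p i w - ν w)) / #s := by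
    intro w
    rw [sum_sub_distrib, sum_const, nsmul_eq_mul, sub_div, mul_div_cancel_left₀ _ hcard.ne']
  unfold tvDist
  simp_rw [hsub, abs_div, abs_of_pos hcard, ← sum_div, sum_comm (s := s)]
  rw [div_right_comm]
  gcongr with i
  exact abs_sum_le_sum_abs _ _

lemma sum_Ico_pow_mul_div_le {lam : ℝ} (hlam0 : 0 ≤ lam) (hlam1 : lam < 1) {M L : ℕ}
    (hML : 2 * M ≤ L) (hML' : M < L) {B : ℝ} (hB : 0 ≤ B) :
    (∑ l ∈ Ico M L, lam ^ (l - M) * B) / ((L : ℝ) - M) ≤ 2 * B / (L * (1 - lam)) := by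
  have hLM : (0 : ℝ) < L - M := sub_pos.2 (by exact_mod_cast hML')
  have hL : (L : ℝ) ≤ 2 * (L - M) := by
    have : ((2 * M : ℕ) : ℝ) ≤ L := by exact_mod_cast hML
    push_cast at this
    linarith
  have hgeom : (∑ l ∈ Ico M L, lam ^ (l - M)) * (1 - lam) ≤ 1 := by
    rw [sum_Ico_eq_sum_range, ← le_div_iff₀ (by linarith)]
    simpa [← Nat.Ico_zero_eq_range] using
      geom_sum_Ico_le_of_lt_one (m := 0) (n := L - M) hlam0 hlam1
  rw [← sum_mul, div_le_div_iff₀ hLM (mul_pos (by linarith) (by linarith))]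
  calc (∑ l ∈ Ico M L, lam ^ (l - M)) * B * (L * (1 - lam))
      = ((∑ l ∈ Ico M L, lam ^ (l - M)) * (1 - lam)) * (B * L) := by ring
    _ ≤ 1 * (B * L) := by gcongr
    _ ≤ 2 * B * (L - M) := by nlinarith

end TotalVariation

lemma Fintype.sum_pi_fin_succ_snoc {α M : Type*} [Fintype α] [AddCommMonoid M] {T : ℕ}
    (F : (Fin (T + 1) → α) → M) :
    ∑ x, F x = ∑ x : Fin T → α, ∑ e, F (Fin.snoc x e) := by
  rw [← (Fin.snocEquiv fun _ => α).sum_comp, Fintype.sum_prod_type, sum_comm]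
  rfl

lemma Fintype.sum_pi_fin_succ_cons {α M : Type*} [Fintype α] [AddCommMonoid M] {T : ℕ}
    (F : (Fin (T + 1) → α) → M) :
    ∑ x, F x = ∑ x : Fin T → α, ∑ e, F (Fin.cons e x) := by
  rw [← (Fin.consEquiv fun _ => α).sum_comp, Fintype.sum_prod_type, sum_comm]
  rfl

lemma Fintype.sum_ite_eq_sum_comp {α β M : Type*} [Fintype α] [Fintype β] [DecidableEq α]
    [AddCommMonoid M] {p : α → Prop} [DecidablePred p] {W : β → α} (hW : W.Injective)
    (hp : ∀ a, p a ↔ ∃ b, W b = a) (g : α → M) :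
    ∑ a, (if p a then g a else 0) = ∑ b, g (W b) := by
  have : univ.filter p = univ.image W := by ext a; simp [hp]
  rw [← sum_filter, this, sum_image hW.injOn]

section Sequences

variable {α : Type*}

/-- A word of length `T` seen as a sequence indexed by `ℕ`, padded with `c` from position `T` on;
positions can then be shifted by plain natural-number arithmetic. -/
def padSeq {T : ℕ} (c : α) (x : Fin T → α) : ℕ → α :=
  fun i => if h : i < T then x ⟨i, h⟩ else c

def consSeq (e : α) (z : ℕ → α) : ℕ → α
  | 0 => e
  | i + 1 => z i

lemma consSeq_of_pos (e : α) (z : ℕ → α) {i : ℕ} (hi : 0 < i) :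
    consSeq e z i = z (i - 1) := by
  obtain ⟨j, rfl⟩ := Nat.exists_eq_add_one_of_ne_zero hi.ne'
  rfl

lemma padSeq_of_lt {T : ℕ} (c : α) (x : Fin T → α) {i : ℕ} (h : i < T) :
    padSeq c x i = x ⟨i, h⟩ :=
  dif_pos h

lemma padSeq_snoc_of_lt {T : ℕ} (c e : α) (x : Fin T → α) {i : ℕ} (h : i < T) :
    padSeq c (Fin.snoc x e : Fin (T + 1) → α) i = padSeq c x i := by
  simp [padSeq, h, Nat.lt_succ_of_lt h, Fin.snoc]

lemma padSeq_snoc_self {T : ℕ} (c e : α) (x : Fin T → α) :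
    padSeq c (Fin.snoc x e : Fin (T + 1) → α) T = e := by
  simp [padSeq, Fin.snoc]

lemma padSeq_cons {T : ℕ} (c e : α) (x : Fin T → α) :
    padSeq c (Fin.cons e x : Fin (T + 1) → α) = consSeq e (padSeq c x) := by
  funext i
  cases i with
  | zero => simp [padSeq, consSeq]
  | succ i =>
    by_cases h : i < T
    · simp [padSeq, consSeq, h, ← Fin.succ_mk]
    · simp [padSeq, consSeq, h]

end Sequences

section Paths

variable {d n R : ℕ} {β : Type*} [DecidableEq β]
variable (r : Fin n → ℕ) (pk : (Fin n → Fin d) → Fin d → ℝ)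

def pathWeight (ρ : (Fin R → Fin d) → ℝ) (T : ℕ) (z : ℕ → Fin d) : ℝ :=
  ρ (fun i => z i) * ∏ l ∈ Ico R T, pk (fun k => z (l - r k)) (z l)

def pathLaw (c : Fin d) (ρ : (Fin R → Fin d) → ℝ) (T : ℕ)
    (f : (ℕ → Fin d) → β) (b : β) : ℝ :=
  ∑ x : Fin T → Fin d, if f (padSeq c x) = b then pathWeight r pk ρ T (padSeq c x) else 0

variable {r pk}

lemma pathWeight_congr (ρ : (Fin R → Fin d) → ℝ) {T : ℕ} (hRT : R ≤ T) {z z' : ℕ → Fin d}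
    (h : ∀ i < T, z i = z' i) : pathWeight r pk ρ T z = pathWeight r pk ρ T z' := by
  unfold pathWeight
  congr 1
  · exact congrArg ρ (funext fun i => h i (i.2.trans_le hRT))
  · refine prod_congr rfl fun l hl => ?_
    have hlT := (mem_Ico.1 hl).2
    rw [h l hlT]
    congr 1
    exact funext fun k => h _ ((Nat.sub_le _ _).trans_lt hlT)

lemma pathWeight_succ (ρ : (Fin R → Fin d) → ℝ) {T : ℕ} (hRT : R ≤ T) (z : ℕ → Fin d) :
    pathWeight r pk ρ (T + 1) z = pathWeight r pk ρ T z * pk (fun k => z (T - r k)) (z T) := by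
  rw [pathWeight, pathWeight, prod_Ico_succ_top hRT, mul_assoc]

lemma sum_pathWeight_snoc (hR : 0 < R) (hrpos : ∀ k, 0 < r k) (hpk1 : ∀ Y, ∑ e, pk Y e = 1)
    (ρ : (Fin R → Fin d) → ℝ) {T : ℕ} (hRT : R ≤ T) (c : Fin d) (x : Fin T → Fin d) :
    ∑ e, pathWeight r pk ρ (T + 1) (padSeq c (Fin.snoc x e : Fin (T + 1) → Fin d)) =
      pathWeight r pk ρ T (padSeq c x) := by
  have hsnoc : ∀ e, ∀ i < T, padSeq c (Fin.snoc x e : Fin (T + 1) → Fin d) i = padSeq c x i :=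
    fun e i hi => padSeq_snoc_of_lt c e x hi
  have hparents : ∀ e k, padSeq c (Fin.snoc x e : Fin (T + 1) → Fin d) (T - r k) =
      padSeq c x (T - r k) :=
    fun e k => hsnoc e _ (Nat.sub_lt (hR.trans_le hRT) (hrpos k))
  simp only [pathWeight_succ ρ hRT, pathWeight_congr ρ hRT (hsnoc _), hparents,
    padSeq_snoc_self, ← mul_sum, hpk1, mul_one]

lemma sum_pathWeight (hR : 0 < R) (hrpos : ∀ k, 0 < r k) (hpk1 : ∀ Y, ∑ e, pk Y e = 1)
    (ρ : (Fin R → Fin d) → ℝ) (c : Fin d) {T : ℕ} (hRT : R ≤ T) :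
    ∑ x : Fin T → Fin d, pathWeight r pk ρ T (padSeq c x) = ∑ Z, ρ Z := by
  induction T, hRT using Nat.le_induction with
  | base =>
    refine sum_congr rfl fun x _ => ?_
    rw [pathWeight, Ico_self, prod_empty, mul_one]
    exact congrArg ρ (funext fun i => padSeq_of_lt c x i.2)
  | succ T hRT ih =>
    rw [Fintype.sum_pi_fin_succ_snoc, ← ih]
    exact sum_congr rfl fun x _ => sum_pathWeight_snoc hR hrpos hpk1 ρ hRT c x

lemma pathLaw_succ (hR : 0 < R) (hrpos : ∀ k, 0 < r k) (hpk1 : ∀ Y, ∑ e, pk Y e = 1)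
    (c : Fin d) (ρ : (Fin R → Fin d) → ℝ) {T : ℕ} (hRT : R ≤ T) {f : (ℕ → Fin d) → β}
    (hf : ∀ z z', (∀ i < T, z i = z' i) → f z = f z') (b : β) :
    pathLaw r pk c ρ (T + 1) f b = pathLaw r pk c ρ T f b := by
  unfold pathLaw
  rw [Fintype.sum_pi_fin_succ_snoc]
  refine sum_congr rfl fun x _ => ?_
  simp only [hf _ _ fun i hi => padSeq_snoc_of_lt c _ x hi]
  split_ifs
  · exact sum_pathWeight_snoc hR hrpos hpk1 ρ hRT c x
  · exact sum_const_zero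

lemma pathLaw_of_le (hR : 0 < R) (hrpos : ∀ k, 0 < r k) (hpk1 : ∀ Y, ∑ e, pk Y e = 1)
    (c : Fin d) (ρ : (Fin R → Fin d) → ℝ) {T T' : ℕ} (hRT : R ≤ T) (hTT' : T ≤ T')
    {f : (ℕ → Fin d) → β} (hf : ∀ z z', (∀ i < T, z i = z' i) → f z = f z') (b : β) :
    pathLaw r pk c ρ T' f b = pathLaw r pk c ρ T f b := by
  induction T', hTT' using Nat.le_induction with
  | base => rfl
  | succ T' hTT' ih =>
    rw [pathLaw_succ hR hrpos hpk1 c ρ (hRT.trans hTT')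
      (fun z z' h => hf z z' fun i hi => h i (hi.trans_le hTT')), ih]

lemma pathLaw_sub (c : Fin d) (σ τ : (Fin R → Fin d) → ℝ) (T : ℕ) (f : (ℕ → Fin d) → β)
    (b : β) : pathLaw r pk c σ T f b - pathLaw r pk c τ T f b = pathLaw r pk c (σ - τ) T f b := by
  simp only [pathLaw, pathWeight, ← sum_sub_distrib, Pi.sub_apply, sub_mul, ite_sub_ite,
    sub_zero]

lemma abs_pathLaw_le (hpk0 : ∀ Y e, 0 ≤ pk Y e) (c : Fin d) (ρ : (Fin R → Fin d) → ℝ)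
    (T : ℕ) (f : (ℕ → Fin d) → β) (b : β) :
    |pathLaw r pk c ρ T f b| ≤ pathLaw r pk c (fun Z => |ρ Z|) T f b := by
  refine (abs_sum_le_sum_abs _ _).trans_eq (sum_congr rfl fun x _ => ?_)
  split_ifs
  · rw [pathWeight, pathWeight, abs_mul, abs_of_nonneg (prod_nonneg fun l _ => hpk0 _ _)]
  · exact abs_zero

lemma sum_pathLaw [Fintype β] (hR : 0 < R) (hrpos : ∀ k, 0 < r k)
    (hpk1 : ∀ Y, ∑ e, pk Y e = 1) (c : Fin d) (ρ : (Fin R → Fin d) → ℝ) {T : ℕ} (hRT : R ≤ T)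
    (f : (ℕ → Fin d) → β) : ∑ b, pathLaw r pk c ρ T f b = ∑ Z, ρ Z := by
  unfold pathLaw
  rw [sum_comm]
  simp only [sum_ite_eq, mem_univ, if_true]
  exact sum_pathWeight hR hrpos hpk1 ρ c hRT

lemma tvDist_pathLaw_le [Fintype β] (hR : 0 < R) (hrpos : ∀ k, 0 < r k)
    (hpk0 : ∀ Y e, 0 ≤ pk Y e) (hpk1 : ∀ Y, ∑ e, pk Y e = 1) (c : Fin d)
    (σ τ : (Fin R → Fin d) → ℝ) {T : ℕ} (hRT : R ≤ T) (f : (ℕ → Fin d) → β) :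
    tvDist (pathLaw r pk c σ T f) (pathLaw r pk c τ T f) ≤ tvDist σ τ := by
  unfold tvDist
  gcongr
  calc ∑ b, |pathLaw r pk c σ T f b - pathLaw r pk c τ T f b|
      ≤ ∑ b, pathLaw r pk c (fun Z => |(σ - τ) Z|) T f b :=
        sum_le_sum fun b _ => (pathLaw_sub c σ τ T f b).symm ▸ abs_pathLaw_le hpk0 c _ T f b
    _ = ∑ Z, |σ Z - τ Z| := sum_pathLaw hR hrpos hpk1 c _ hRT f

lemma windowMatrix_mulVec_apply (hR : 0 < R) (hrpos : ∀ k, 0 < r k)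
    (ρ : (Fin R → Fin d) → ℝ) (z : ℕ → Fin d) :
    (windowMatrix d n R hR r hrpos pk *ᵥ ρ) (fun i => z i) =
      ∑ e, pk (fun k => consSeq e z (R - r k)) (z (R - 1)) * ρ (fun i => consSeq e z i) := by
  simp only [Matrix.mulVec, dotProduct, windowMatrix, Matrix.of_apply, ite_mul, zero_mul]
  refine Fintype.sum_ite_eq_sum_comp (W := fun e (i : Fin R) => consSeq e z i)
    (fun e e' h => congrFun h ⟨0, hR⟩) (fun Z => ⟨fun h => ⟨Z ⟨0, hR⟩, ?_⟩, ?_⟩) _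
  · funext ⟨i, hi⟩
    cases i with
    | zero => rfl
    | succ j => exact h ⟨j, by omega⟩
  · rintro ⟨e, rfl⟩ j
    rfl

lemma sum_pathWeight_consSeq (hR : 0 < R) (hrpos : ∀ k, 0 < r k) (hrR : ∀ k, r k ≤ R)
    (ρ : (Fin R → Fin d) → ℝ) {T : ℕ} (hRT : R ≤ T) (z : ℕ → Fin d) :
    ∑ e, pathWeight r pk ρ (T + 1) (consSeq e z) =
      pathWeight r pk (windowMatrix d n R hR r hrpos pk *ᵥ ρ) T z := by
  have htail : ∀ e, ∏ l ∈ Ico (R + 1) (T + 1), pk (fun k => consSeq e z (l - r k)) (consSeq e z l)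
      = ∏ l ∈ Ico R T, pk (fun k => z (l - r k)) (z l) := by
    intro e
    rw [← prod_Ico_add']
    refine prod_congr rfl fun l hl => ?_
    have hRl := (mem_Ico.1 hl).1
    congr 1
    funext k
    have hrk := hrR k
    rw [consSeq_of_pos e z (by omega)]
    congr 1
    omega
  have hsplit : ∀ e, pathWeight r pk ρ (T + 1) (consSeq e z) =
      pk (fun k => consSeq e z (R - r k)) (z (R - 1)) * ρ (fun i => consSeq e z i) *
        ∏ l ∈ Ico R T, pk (fun k => z (l - r k)) (z l) := by
    intro e
    rw [pathWeight, prod_eq_prod_Ico_succ_bot (by omega), htail, consSeq_of_pos e z hR]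
    ring
  rw [pathWeight, windowMatrix_mulVec_apply, sum_mul]
  exact sum_congr rfl fun e _ => hsplit e

lemma pathLaw_succ_eq_mulVec (hR : 0 < R) (hrpos : ∀ k, 0 < r k)
    (hrR : ∀ k, r k ≤ R) (c : Fin d) (ρ : (Fin R → Fin d) → ℝ) {T : ℕ} (hRT : R ≤ T)
    {f g : (ℕ → Fin d) → β} (hfg : ∀ e z, f (consSeq e z) = g z) (b : β) :
    pathLaw r pk c ρ (T + 1) f b =
      pathLaw r pk c (windowMatrix d n R hR r hrpos pk *ᵥ ρ) T g b := by
  unfold pathLaw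
  rw [Fintype.sum_pi_fin_succ_cons]
  refine sum_congr rfl fun x _ => ?_
  simp only [padSeq_cons, hfg]
  split_ifs
  · exact sum_pathWeight_consSeq hR hrpos hrR ρ hRT _
  · exact sum_const_zero

lemma sum_windowMatrix_mulVec (hd : 0 < d) (hR : 0 < R) (hrpos : ∀ k, 0 < r k)
    (hrR : ∀ k, r k ≤ R) (hpk1 : ∀ Y, ∑ e, pk Y e = 1) (ρ : (Fin R → Fin d) → ℝ) :
    ∑ Z, (windowMatrix d n R hR r hrpos pk *ᵥ ρ) Z = ∑ Z, ρ Z := by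
  let c : Fin d := ⟨0, hd⟩
  calc ∑ Z, (windowMatrix d n R hR r hrpos pk *ᵥ ρ) Z
      = ∑ b, pathLaw r pk c (windowMatrix d n R hR r hrpos pk *ᵥ ρ) R (fun _ => ()) b :=
        (sum_pathLaw hR hrpos hpk1 c _ le_rfl _).symm
    _ = ∑ b, pathLaw r pk c ρ (R + 1) (fun _ => ()) b := by
        simp only [pathLaw_succ_eq_mulVec hR hrpos hrR c ρ le_rfl (f := fun _ => ())
          (g := fun _ => ()) fun _ _ => rfl]
    _ = ∑ Z, ρ Z := sum_pathLaw hR hrpos hpk1 c _ (Nat.le_succ R) _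

def windowAt (S : Finset ℕ) (l : ℕ) (z : ℕ → Fin d) : Fin d × (S → Fin d) :=
  (z l, fun s => z (l - s))

lemma windowAt_congr (S : Finset ℕ) (l : ℕ) {z z' : ℕ → Fin d} (h : ∀ i < l + 1, z i = z' i) :
    windowAt S l z = windowAt S l z' :=
  Prod.ext (h l l.lt_succ_self) (funext fun _ => h _ (Nat.lt_succ_of_le (Nat.sub_le _ _)))

lemma windowAt_consSeq (S : Finset ℕ) {l : ℕ} (hS : ∀ s ∈ S, s ≤ l) (e : Fin d)
    (z : ℕ → Fin d) : windowAt S (l + 1) (consSeq e z) = windowAt S l z := by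
  refine Prod.ext rfl (funext fun s => ?_)
  have hs := hS s s.2
  simp only [windowAt]
  rw [consSeq_of_pos e z (by omega)]
  congr 1
  omega

lemma ngramProb_eq_pathWeight {T : ℕ} (ρ : (Fin R → Fin d) → ℝ) (hRT : R ≤ T) (c : Fin d)
    (x : Fin T → Fin d) : ngramProb d n R T r pk ρ hRT x = pathWeight r pk ρ T (padSeq c x) := by
  rw [ngramProb, pathWeight, ← prod_attach (Ico R T)]
  congr 1
  · exact congrArg ρ (funext fun i => (padSeq_of_lt c x _).symm)
  · refine prod_congr rfl fun l _ => ?_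
    have hl := (mem_Ico.1 l.2).2
    rw [padSeq_of_lt c x hl]
    congr 1
    exact funext fun k => (padSeq_of_lt c x _).symm

lemma windowLaw_eq_pathLaw {T : ℕ} (S : Finset ℕ) (ρ : (Fin R → Fin d) → ℝ) (hRT : R ≤ T)
    (c : Fin d) {l : ℕ} (hl : l < T) :
    windowLaw d T S (ngramProb d n R T r pk ρ hRT) l hl = pathLaw r pk c ρ T (windowAt S l) := by
  funext w
  refine sum_congr rfl fun x _ => ?_
  have hwin : window d T S x l hl = windowAt S l (padSeq c x) :=
    Prod.ext (padSeq_of_lt c x hl).symm (funext fun s => (padSeq_of_lt c x _).symm)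
  rw [hwin, ngramProb_eq_pathWeight ρ hRT c x]

lemma pathLaw_windowAt_eq_iterate (hR : 0 < R) (hrpos : ∀ k, 0 < r k) (hrR : ∀ k, r k ≤ R)
    (hpk1 : ∀ Y, ∑ e, pk Y e = 1) (c : Fin d) {S : Finset ℕ} {M : ℕ} (hRM : R ≤ M)
    (hS : ∀ s ∈ S, s ≤ M) (ρ : (Fin R → Fin d) → ℝ) {l T : ℕ} (hMl : M ≤ l) (hlT : l < T) :
    pathLaw r pk c ρ T (windowAt S l) =
      pathLaw r pk c ((windowMatrix d n R hR r hrpos pk *ᵥ ·)^[l - M] ρ) (M + 1)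
        (windowAt S M) := by
  funext w
  rw [pathLaw_of_le hR hrpos hpk1 c ρ (Nat.le_succ_of_le (hRM.trans hMl)) hlT
    (fun _ _ => windowAt_congr S l) w]
  induction l, hMl using Nat.le_induction generalizing ρ with
  | base => simp
  | succ l hMl ih =>
    rw [pathLaw_succ_eq_mulVec hR hrpos hrR c ρ (by omega)
      (windowAt_consSeq S fun s hs => (hS s hs).trans hMl), ih _ (by omega),
      ← Function.iterate_succ_apply, Nat.succ_sub hMl]

lemma windowLaw_ngramProb_eq_iterate (hd : 0 < d) (hR : 0 < R) (hrpos : ∀ k, 0 < r k)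
    (hrR : ∀ k, r k ≤ R) (hpk1 : ∀ Y, ∑ e, pk Y e = 1) {S : Finset ℕ} {M : ℕ} (hRM : R ≤ M)
    (hS : ∀ s ∈ S, s ≤ M) (ρ : (Fin R → Fin d) → ℝ) {l T : ℕ} (hMl : M ≤ l) (hlT : l < T)
    (hRT : R ≤ T) :
    windowLaw d T S (ngramProb d n R T r pk ρ hRT) l hlT =
      windowLaw d (M + 1) S (ngramProb d n R (M + 1) r pk
        ((windowMatrix d n R hR r hrpos pk *ᵥ ·)^[l - M] ρ) (Nat.le_succ_of_le hRM))
        M M.lt_succ_self := by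
  let c : Fin d := ⟨0, hd⟩
  rw [windowLaw_eq_pathLaw S ρ hRT c, windowLaw_eq_pathLaw S _ _ c,
    pathLaw_windowAt_eq_iterate hR hrpos hrR hpk1 c hRM hS ρ hMl hlT]

lemma tvDist_windowLaw_ngramProb_le (hd : 0 < d) (hR : 0 < R) (hrpos : ∀ k, 0 < r k)
    (hpk0 : ∀ Y e, 0 ≤ pk Y e) (hpk1 : ∀ Y, ∑ e, pk Y e = 1) {T : ℕ} (S : Finset ℕ)
    (σ τ : (Fin R → Fin d) → ℝ) (hRT : R ≤ T) {l : ℕ} (hl : l < T) :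
    tvDist (windowLaw d T S (ngramProb d n R T r pk σ hRT) l hl)
      (windowLaw d T S (ngramProb d n R T r pk τ hRT) l hl) ≤ tvDist σ τ := by
  let c : Fin d := ⟨0, hd⟩
  rw [windowLaw_eq_pathLaw S σ hRT c, windowLaw_eq_pathLaw S τ hRT c]
  exact tvDist_pathLaw_le hR hrpos hpk0 hpk1 c σ τ hRT _

lemma tvDist_windowLaw_le_pow_mul_sqrt_chiSq (hd : 0 < d) (hR : 0 < R) (hrpos : ∀ k, 0 < r k)
    (hrR : ∀ k, r k ≤ R) (hpk0 : ∀ Y e, 0 ≤ pk Y e) (hpk1 : ∀ Y, ∑ e, pk Y e = 1)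
    {μ0 μ : (Fin R → Fin d) → ℝ} (hμ01 : ∑ Z, μ0 Z = 1) (hμpos : ∀ Z, 0 < μ Z)
    (hμ1 : ∑ Z, μ Z = 1) (hstat : windowMatrix d n R hR r hrpos pk *ᵥ μ = μ) {lam : ℝ}
    (hlam0 : 0 ≤ lam)
    (hop : ∀ v, √(∑ Z', (specA d n R hR r hrpos pk μ *ᵥ v) Z' ^ 2) ≤ lam * √(∑ Z, v Z ^ 2))
    {S : Finset ℕ} {M : ℕ} (hRM : R ≤ M) (hS : ∀ s ∈ S, s ≤ M) {l T : ℕ} (hMl : M ≤ l)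
    (hlT : l < T) (hRT : R ≤ T) :
    tvDist (windowLaw d T S (ngramProb d n R T r pk μ0 hRT) l hlT)
        (windowLaw d (M + 1) S (ngramProb d n R (M + 1) r pk μ (Nat.le_succ_of_le hRM)) M
          M.lt_succ_self) ≤
      lam ^ (l - M) * √(chiSq μ0 μ) := by
  set P := windowMatrix d n R hR r hrpos pk
  rw [windowLaw_ngramProb_eq_iterate hd hR hrpos hrR hpk1 hRM hS μ0 hMl]
  calc _ ≤ tvDist ((P *ᵥ ·)^[l - M] μ0) μ :=
        tvDist_windowLaw_ngramProb_le hd hR hrpos hpk0 hpk1 S _ _ _ _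
    _ ≤ √(chiSq ((P *ᵥ ·)^[l - M] μ0) μ) / 2 := tvDist_le_sqrt_chiSq _ hμpos hμ1
    _ ≤ √(chiSq ((P *ᵥ ·)^[l - M] μ0) μ) := half_le_self (Real.sqrt_nonneg _)
    _ ≤ lam ^ (l - M) * √(chiSq μ0 μ) :=
        sqrt_chiSq_iterate_mulVec_le hμpos hμ1 hstat (sum_windowMatrix_mulVec hd hR hrpos hrR hpk1)
          hlam0 hop hμ01 _

end Paths

/-- First-order convergence of window laws of the `n`-gram chain to the
stationary window law: (i) the averaged law of the windows `Y_{M+1},…,Y_L` is within TV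
distance `2√(D₀+1)/(L(1−λ))` of the stationary window marginal `ν`; (ii) the law of `Y_{L+1}`
is within TV distance `λ^{L−M}√(D₀+1)` of `ν`. -/
theorem statement5
    (d n R M L : ℕ) (hd : 0 < d) (hR : 0 < R)
    (r : Fin n → ℕ) (hrpos : ∀ i, 0 < r i)
    (hrR : ∀ i, r i ≤ R)
    (pk : (Fin n → Fin d) → Fin d → ℝ)
    (hpk0 : ∀ Y e, 0 ≤ pk Y e) (hpk1 : ∀ Y, ∑ e, pk Y e = 1)
    (μ0 : (Fin R → Fin d) → ℝ) (hμ01 : ∑ Z, μ0 Z = 1)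
    (μ : (Fin R → Fin d) → ℝ) (hμpos : ∀ Z, 0 < μ Z) (hμ1 : ∑ Z, μ Z = 1)
    (hstat : ∀ Z', μ Z' = ∑ Z, windowMatrix d n R hR r hrpos pk Z' Z * μ Z)
    (lam : ℝ) (hlam0 : 0 ≤ lam) (hlam1 : lam < 1)
    (hop : ∀ v : (Fin R → Fin d) → ℝ,
      Real.sqrt (∑ Z', Matrix.mulVec (specA d n R hR r hrpos pk μ) v Z' ^ 2)
        ≤ lam * Real.sqrt (∑ Z, v Z ^ 2))
    (hRM : R ≤ M) (hML : 2 * M ≤ L)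
    (S : Finset ℕ) (hS : ∀ s ∈ S, 1 ≤ s ∧ s ≤ M) :
    tvDist
        (fun w =>
          (∑ l ∈ (Finset.Ico M L).attach,
              windowLaw d (L + 1) S (ngramProb d n R (L + 1) r pk μ0 (by omega)) l.1
                (icoLtSucc l) w) /
            ((L : ℝ) - M))
        (windowLaw d (M + 1) S (ngramProb d n R (M + 1) r pk μ (by omega)) M
          (Nat.lt_succ_self M))
      ≤ 2 * Real.sqrt (chiSq μ0 μ + 1) / (L * (1 - lam)) ∧
    tvDist
        (windowLaw d (L + 1) S (ngramProb d n R (L + 1) r pk μ0 (by omega)) L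
          (Nat.lt_succ_self L))
        (windowLaw d (M + 1) S (ngramProb d n R (M + 1) r pk μ (by omega)) M
          (Nat.lt_succ_self M))
      ≤ lam ^ (L - M) * Real.sqrt (chiSq μ0 μ + 1) := by
  set ν := windowLaw d (M + 1) S (ngramProb d n R (M + 1) r pk μ (by omega)) M M.lt_succ_self
  set B := √(chiSq μ0 μ + 1)
  have hbound : ∀ l, M ≤ l → ∀ hl : l < L + 1,
      tvDist (windowLaw d (L + 1) S (ngramProb d n R (L + 1) r pk μ0 (by omega)) l hl) ν ≤
        lam ^ (l - M) * B := fun l hMl hl =>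
    (tvDist_windowLaw_le_pow_mul_sqrt_chiSq hd hR hrpos hrR hpk0 hpk1 hμ01 hμpos hμ1
      (funext fun Z => (hstat Z).symm) hlam0 hop hRM (fun s hs => (hS s hs).2) hMl hl _).trans
      (by gcongr; exact Real.sqrt_le_sqrt (by linarith))
  refine ⟨?_, hbound L (by omega) L.lt_succ_self⟩
  have hML' : M < L := by omega
  have hcard : (L : ℝ) - M = #(Ico M L).attach := by simp [Nat.cast_sub hML'.le]
  calc _ ≤ (∑ l ∈ (Ico M L).attach, tvDist (windowLaw d (L + 1) S
          (ngramProb d n R (L + 1) r pk μ0 (by omega)) l.1 (icoLtSucc l)) ν) / ((L : ℝ) - M) := by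
        rw [hcard]
        exact tvDist_average_le _ (by simpa using hML') _ _
    _ ≤ (∑ l ∈ (Ico M L).attach, lam ^ (l.1 - M) * B) / ((L : ℝ) - M) :=
        div_le_div_of_nonneg_right (sum_le_sum fun l _ => hbound l (mem_Ico.1 l.2).1 _)
          (sub_nonneg.2 (by exact_mod_cast hML'.le))
    _ = (∑ l ∈ Ico M L, lam ^ (l - M) * B) / ((L : ℝ) - M) := by
        rw [sum_attach (Ico M L) fun l => lam ^ (l - M) * B]
    _ ≤ 2 * B / (L * (1 - lam)) := sum_Ico_pow_mul_div_le hlam0 hlam1 hML hML' (Real.sqrt_nonneg _)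
end

section
/- In the multi-head feature setup, fix S* ∈ [H]_{≤D} with S* ⊆ {1,…,min(H,M)}, and set Δ₁ = 1 − p_{S*} and Δ₂ = 1 − ∏_{h∈S*} (σ^{(h)}_{−h})². Then for every l with M+1 ≤ l ≤ L: | s_l − ∏_{h∈S*} 1{x_{l−h} = x_{L+1−h}} | ≤ Δ₁ + Δ₂. -/
/-!
A head score `⟨v_l^{(h)}, v_{L+1}^{(h)}⟩ = Σ_{i,j} σ_i σ_j 1{x_{l-i} = x_{L+1-j}}` lies in `[0, 1]`,
and its diagonal term `(i, j) = (h, h)` alone pins it within `1 - σ_h²` of `1{x_{l-h} = x_{L+1-h}}`: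
it is at least `σ_h²` on a match and at most `1 - σ_h²` on a mismatch. Since a single mismatch
already kills the product of indicators, the product of the scores over `S*` is within
`1 - ∏ σ_h²` of it. Finally, the sets `S ≠ S*` carry weight `1 - p_{S*}` in a convex combination of
numbers in `[0, 1]`, so they move it by at most that much.
-/

open Finset

section HeadScore

variable {ι α : Type*} [Fintype α] [DecidableEq α]

/-- `⟨v, w⟩` for `v = Σ_{i ∈ s} τ_i e_{y i}` and `w = Σ_{i ∈ s} τ_i e_{z i}`, in the standard basis
of `ℝ^α`. -/
def headScore (τ : ι → ℝ) (s : Finset ι) (y z : ι → α) : ℝ :=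
  ∑ k : α, (∑ i ∈ s, τ i * if y i = k then 1 else 0) * (∑ i ∈ s, τ i * if z i = k then 1 else 0)

theorem headScore_eq_sum_product (τ : ι → ℝ) (s : Finset ι) (y z : ι → α) :
    headScore τ s y z = ∑ q ∈ s ×ˢ s, τ q.1 * τ q.2 * if y q.1 = z q.2 then 1 else 0 := by
  simp only [headScore, sum_mul_sum, sum_product]
  rw [sum_comm]
  refine sum_congr rfl fun i _ => ?_
  rw [sum_comm]
  refine sum_congr rfl fun j _ => ?_
  simp [mul_ite, mul_comm, eq_comm]

variable {τ : ι → ℝ} {s : Finset ι}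

theorem mul_ite_one_zero_mem_Icc {a : ℝ} (ha : 0 ≤ a) (P : Prop) [Decidable P] :
    a * (if P then 1 else 0) ∈ Set.Icc 0 a := by
  split_ifs <;> simp [ha]

theorem mul_nonneg_of_mem_product (hτ : ∀ i ∈ s, 0 ≤ τ i) {q : ι × ι} (hq : q ∈ s ×ˢ s) :
    0 ≤ τ q.1 * τ q.2 :=
  mul_nonneg (hτ _ (mem_product.mp hq).1) (hτ _ (mem_product.mp hq).2)

theorem sum_product_mul_eq_one (hτ : ∑ i ∈ s, τ i = 1) : ∑ q ∈ s ×ˢ s, τ q.1 * τ q.2 = 1 := by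
  rw [sum_product, ← sum_mul_sum, hτ, one_mul]

theorem headScore_nonneg (hτ : ∀ i ∈ s, 0 ≤ τ i) (y z : ι → α) : 0 ≤ headScore τ s y z := by
  rw [headScore_eq_sum_product]
  exact sum_nonneg fun q hq => (mul_ite_one_zero_mem_Icc (mul_nonneg_of_mem_product hτ hq) _).1

theorem headScore_le_one (hτ₀ : ∀ i ∈ s, 0 ≤ τ i) (hτ₁ : ∑ i ∈ s, τ i = 1) (y z : ι → α) :
    headScore τ s y z ≤ 1 := by
  rw [headScore_eq_sum_product]
  refine (sum_le_sum fun q hq => ?_).trans (sum_product_mul_eq_one hτ₁).le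
  exact (mul_ite_one_zero_mem_Icc (mul_nonneg_of_mem_product hτ₀ hq) _).2

theorem abs_headScore_sub_ite_le (hτ₀ : ∀ i ∈ s, 0 ≤ τ i) (hτ₁ : ∑ i ∈ s, τ i = 1)
    (y z : ι → α) {h : ι} (hh : h ∈ s) :
    |headScore τ s y z - if y h = z h then 1 else 0| ≤ 1 - τ h ^ 2 := by
  set t : ι × ι → ℝ := fun q => τ q.1 * τ q.2 * if y q.1 = z q.2 then 1 else 0
  have hhh : (h, h) ∈ s ×ˢ s := mem_product.mpr ⟨hh, hh⟩
  have ht : ∀ q ∈ s ×ˢ s, t q ∈ Set.Icc 0 (τ q.1 * τ q.2) := fun q hq =>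
    mul_ite_one_zero_mem_Icc (mul_nonneg_of_mem_product hτ₀ hq) _
  have hdiag : t (h, h) ≤ headScore τ s y z := by
    rw [headScore_eq_sum_product]
    exact single_le_sum (fun q hq => (ht q hq).1) hhh
  have hdiag' : τ h * τ h - t (h, h) ≤ 1 - headScore τ s y z := by
    have hmiss : ∑ q ∈ s ×ˢ s, (τ q.1 * τ q.2 - t q) = 1 - headScore τ s y z := by
      rw [sum_sub_distrib, sum_product_mul_eq_one hτ₁, headScore_eq_sum_product]
    exact hmiss ▸ single_le_sum (f := fun q => τ q.1 * τ q.2 - t q)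
      (fun q hq => sub_nonneg.mpr (ht q hq).2) hhh
  have h₀ := headScore_nonneg hτ₀ y z
  have h₁ := headScore_le_one hτ₀ hτ₁ y z
  by_cases hyz : y h = z h <;> simp only [t, hyz, if_true, if_false] at hdiag hdiag' ⊢ <;>
    rw [abs_le] <;> constructor <;> nlinarith

end HeadScore

theorem prod_le_of_mem_of_le_one {ι : Type*} {s : Finset ι} {f : ι → ℝ} (hf₀ : ∀ i ∈ s, 0 ≤ f i)
    (hf₁ : ∀ i ∈ s, f i ≤ 1) {j : ι} (hj : j ∈ s) : ∏ i ∈ s, f i ≤ f j := by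
  simpa using prod_le_prod_of_subset_of_le_one (singleton_subset_iff.mpr hj) hf₀
    (fun i hi _ => hf₁ i hi)

theorem abs_prod_sub_prod_ite_le {ι : Type*} {s : Finset ι} {a c : ι → ℝ} {P : ι → Prop}
    [DecidablePred P] (ha₀ : ∀ i ∈ s, 0 ≤ a i) (ha₁ : ∀ i ∈ s, a i ≤ 1) (hc₀ : ∀ i ∈ s, 0 ≤ c i)
    (hac : ∀ i ∈ s, |a i - if P i then 1 else 0| ≤ 1 - c i) :
    |∏ i ∈ s, a i - ∏ i ∈ s, (if P i then 1 else 0 : ℝ)| ≤ 1 - ∏ i ∈ s, c i := by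
  have hc₁ : ∀ i ∈ s, c i ≤ 1 := fun i hi => by
    have hi' := abs_le.mp (hac i hi)
    split_ifs at hi' <;> linarith [ha₀ i hi, ha₁ i hi]
  by_cases hP : ∀ i ∈ s, P i
  · have hca : ∀ i ∈ s, c i ≤ a i := fun i hi => by
      have hi' := abs_le.mp (hac i hi)
      rw [if_pos (hP i hi)] at hi'
      linarith
    rw [prod_eq_one fun i hi => if_pos (hP i hi), abs_sub_comm,
      abs_of_nonneg (sub_nonneg.mpr (prod_le_one ha₀ ha₁))]
    linarith [prod_le_prod hc₀ hca]
  · push Not at hP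
    obtain ⟨j, hj, hPj⟩ := hP
    have hajc : a j ≤ 1 - c j := by
      have hj' := abs_le.mp (hac j hj)
      rw [if_neg hPj] at hj'
      linarith
    rw [prod_eq_zero (f := fun i => if P i then (1 : ℝ) else 0) hj (if_neg hPj), sub_zero,
      abs_of_nonneg (prod_nonneg ha₀)]
    linarith [prod_le_of_mem_of_le_one ha₀ ha₁ hj, prod_le_of_mem_of_le_one hc₀ hc₁ hj]

theorem abs_sum_mul_sub_le {ι : Type*} [DecidableEq ι] {F : Finset ι} {p f : ι → ℝ}
    (hp₀ : ∀ S ∈ F, 0 ≤ p S) (hp₁ : ∑ S ∈ F, p S = 1) (hf₀ : ∀ S ∈ F, 0 ≤ f S)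
    (hf₁ : ∀ S ∈ F, f S ≤ 1) {S₀ : ι} (hS₀ : S₀ ∈ F) (g : ℝ) :
    |∑ S ∈ F, p S * f S - g| ≤ (1 - p S₀) + |f S₀ - g| := by
  set R := ∑ S ∈ F.erase S₀, p S * f S
  have hrest : ∑ S ∈ F.erase S₀, p S = 1 - p S₀ := by
    rw [← hp₁, ← add_sum_erase F p hS₀, add_sub_cancel_left]
  have hR₀ : 0 ≤ R := sum_nonneg fun S hS =>
    mul_nonneg (hp₀ S (mem_of_mem_erase hS)) (hf₀ S (mem_of_mem_erase hS))
  have hR₁ : R ≤ 1 - p S₀ := hrest ▸ sum_le_sum fun S hS =>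
    mul_le_of_le_one_right (hp₀ S (mem_of_mem_erase hS)) (hf₁ S (mem_of_mem_erase hS))
  have hmass : 0 ≤ 1 - p S₀ := hR₀.trans hR₁
  have hdev : |R - (1 - p S₀) * f S₀| ≤ 1 - p S₀ :=
    abs_sub_le_of_nonneg_of_le hR₀ hR₁ (mul_nonneg hmass (hf₀ S₀ hS₀))
      (mul_le_of_le_one_right hmass (hf₁ S₀ hS₀))
  calc |∑ S ∈ F, p S * f S - g| = |(R - (1 - p S₀) * f S₀) + (f S₀ - g)| := by
        rw [← add_sum_erase F _ hS₀]; congr 1; ring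
    _ ≤ (1 - p S₀) + |f S₀ - g| := (abs_add_le _ _).trans (by linarith)

theorem abs_sum_prod_headScore_sub_prod_ite_le {α : Type*} [Fintype α] [DecidableEq α]
    {H M D : ℕ} {σ : ℕ → ℕ → ℝ} (hσ₀ : ∀ h i, 0 ≤ σ h i)
    (hσ₁ : ∀ h ∈ Icc 1 H, ∑ i ∈ Icc 1 M, σ h i = 1)
    {p : Finset ℕ → ℝ} (hp₀ : ∀ S, 0 ≤ p S)
    (hp₁ : ∑ S ∈ (Icc 1 H).powerset.filter (fun S => S.card ≤ D), p S = 1)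
    {S₀ : Finset ℕ} (hS₀ : S₀ ∈ (Icc 1 H).powerset.filter (fun S => S.card ≤ D))
    (hS₀M : ∀ h ∈ S₀, h ≤ M) (y z : ℕ → α) :
    |∑ S ∈ (Icc 1 H).powerset.filter (fun S => S.card ≤ D),
        p S * ∏ h ∈ S, headScore (σ h) (Icc 1 M) y z -
      ∏ h ∈ S₀, (if y h = z h then 1 else 0 : ℝ)| ≤ (1 - p S₀) + (1 - ∏ h ∈ S₀, σ h h ^ 2) := by
  have hsub : ∀ S ∈ (Icc 1 H).powerset.filter (fun S => S.card ≤ D), S ⊆ Icc 1 H :=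
    fun S hS => mem_powerset.mp (mem_filter.mp hS).1
  have hscore₀ : ∀ h, 0 ≤ headScore (σ h) (Icc 1 M) y z :=
    fun h => headScore_nonneg (fun i _ => hσ₀ h i) y z
  have hscore₁ : ∀ h ∈ Icc 1 H, headScore (σ h) (Icc 1 M) y z ≤ 1 :=
    fun h hh => headScore_le_one (fun i _ => hσ₀ h i) (hσ₁ h hh) y z
  refine (abs_sum_mul_sub_le (fun S _ => hp₀ S) hp₁ (fun S _ => prod_nonneg fun h _ => hscore₀ h)
    (fun S hS => prod_le_one (fun h _ => hscore₀ h) fun h hh => hscore₁ h (hsub S hS hh))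
    hS₀ _).trans (add_le_add le_rfl ?_)
  refine abs_prod_sub_prod_ite_le (fun h _ => hscore₀ h) (fun h hh => hscore₁ h (hsub S₀ hS₀ hh))
    (fun h _ => sq_nonneg _) fun h hh => ?_
  exact abs_headScore_sub_ite_le (fun i _ => hσ₀ h i) (hσ₁ h (hsub S₀ hS₀ hh)) y z
    (mem_Icc.mpr ⟨(mem_Icc.mp (hsub S₀ hS₀ hh)).1, hS₀M h hh⟩)

theorem statement10_general (d H M D L : ℕ)
    (σ : ℕ → ℕ → ℝ)
    (hσ0 : ∀ h i, 0 ≤ σ h i)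
    (hσ1 : ∀ h ∈ Finset.Icc 1 H, ∑ i ∈ Finset.Icc 1 M, σ h i = 1)
    (p : Finset ℕ → ℝ) (hp0 : ∀ S, 0 ≤ p S)
    (hp1 : ∑ S ∈ (Finset.Icc 1 H).powerset.filter (fun S => S.card ≤ D), p S = 1)
    (Sstar : Finset ℕ)
    (hSstar : Sstar ∈ (Finset.Icc 1 H).powerset.filter (fun S => S.card ≤ D))
    (hSstarM : ∀ h ∈ Sstar, h ≤ M)
    (x : Fin (L + 1) → Fin d)
    (l0 : ℕ) (hl0 : l0 ∈ Finset.Ico M L) :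
    |(∑ S ∈ (Finset.Icc 1 H).powerset.filter (fun S => S.card ≤ D),
          p S * ∏ h ∈ S,
            ∑ kk : Fin d,
              (∑ i ∈ Finset.Icc 1 M, σ h i *
                  (if x ⟨l0 - i, lt_of_le_of_lt (Nat.sub_le _ _)
                      (Nat.lt_succ_of_lt (Finset.mem_Ico.mp hl0).2)⟩ = kk then (1 : ℝ) else 0)) *
              (∑ i ∈ Finset.Icc 1 M, σ h i *
                  (if x ⟨L - i, Nat.lt_succ_of_le (Nat.sub_le _ _)⟩ = kk then (1 : ℝ) else 0))) -
        ∏ h ∈ Sstar,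
          (if x ⟨l0 - h, lt_of_le_of_lt (Nat.sub_le _ _)
                (Nat.lt_succ_of_lt (Finset.mem_Ico.mp hl0).2)⟩ =
              x ⟨L - h, Nat.lt_succ_of_le (Nat.sub_le _ _)⟩ then (1 : ℝ) else 0)|
      ≤ (1 - p Sstar) + (1 - ∏ h ∈ Sstar, σ h h ^ 2) :=
  abs_sum_prod_headScore_sub_prod_ite_le hσ0 hσ1 hp0 hp1 hSstar hSstarM
    (fun i => x ⟨l0 - i, lt_of_le_of_lt (Nat.sub_le _ _)
      (Nat.lt_succ_of_lt (Finset.mem_Ico.mp hl0).2)⟩)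
    (fun i => x ⟨L - i, Nat.lt_succ_of_le (Nat.sub_le _ _)⟩)

/-- Model misspecification error: in the multi-head feature setup, the
attention score `s_l = Σ_{S ∈ [H]_{≤D}} p_S ∏_{h∈S} ⟨v_l^{(h)}, v_{L+1}^{(h)}⟩` deviates from
the perfect indicator `∏_{h∈S*} 1{x_{l−h} = x_{L+1−h}}` by at most
`Δ₁ + Δ₂ = (1 − p_{S*}) + (1 − ∏_{h∈S*} (σ^{(h)}_{−h})²)`. -/
theorem statement10 (d H M D L : ℕ) (hd : 0 < d) (hH : 0 < H) (hM : 0 < M) (hD : 0 < D)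
    (hML : M < L)
    (σ : ℕ → ℕ → ℝ)
    (hσ0 : ∀ h i, 0 ≤ σ h i)
    (hσ1 : ∀ h ∈ Finset.Icc 1 H, ∑ i ∈ Finset.Icc 1 M, σ h i = 1)
    (p : Finset ℕ → ℝ) (hp0 : ∀ S, 0 ≤ p S)
    (hp1 : ∑ S ∈ (Finset.Icc 1 H).powerset.filter (fun S => S.card ≤ D), p S = 1)
    (Sstar : Finset ℕ)
    (hSstar : Sstar ∈ (Finset.Icc 1 H).powerset.filter (fun S => S.card ≤ D))
    (hSstarM : ∀ h ∈ Sstar, h ≤ M)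
    (x : Fin (L + 1) → Fin d)
    (l0 : ℕ) (hl0 : l0 ∈ Finset.Ico M L) :
    |(∑ S ∈ (Finset.Icc 1 H).powerset.filter (fun S => S.card ≤ D),
          p S * ∏ h ∈ S,
            ∑ kk : Fin d,
              (∑ i ∈ Finset.Icc 1 M, σ h i *
                  (if x ⟨l0 - i, lt_of_le_of_lt (Nat.sub_le _ _)
                      (Nat.lt_succ_of_lt (Finset.mem_Ico.mp hl0).2)⟩ = kk then (1 : ℝ) else 0)) *
              (∑ i ∈ Finset.Icc 1 M, σ h i *
                  (if x ⟨L - i, Nat.lt_succ_of_le (Nat.sub_le _ _)⟩ = kk then (1 : ℝ) else 0))) -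
        ∏ h ∈ Sstar,
          (if x ⟨l0 - h, lt_of_le_of_lt (Nat.sub_le _ _)
                (Nat.lt_succ_of_lt (Finset.mem_Ico.mp hl0).2)⟩ =
              x ⟨L - h, Nat.lt_succ_of_le (Nat.sub_le _ _)⟩ then (1 : ℝ) else 0)|
      ≤ (1 - p Sstar) + (1 - ∏ h ∈ Sstar, σ h h ^ 2) :=
  statement10_general d H M D L σ hσ0 hσ1 p hp0 hp1 Sstar hSstar hSstarM x l0 hl0
end

section
/- Let d ≥ 1, let M, L be integers with L ≥ M+2, let a ∈ [0,1], ε ∈ (0,1] and C > 0, and let ρ be any probability distribution on sequences X = (x_1,…,x_{L+1}) ∈ 𝒳^{L+1}. For each sequence X, let t(X) = (t_l)_{l=M+1}^{L} be any vector with every t_l ∈ [0,1], let σ_l(a·t) = exp(a·t_l)/Σ_{l′=M+1}^{L} exp(a·t_{l′}), y(k) = Σ_{l=M+1}^{L} σ_l(a·t)·1{x_l = e_k}, and ȳ(k) = (L−M)^{−1} Σ_{l=M+1}^{L} 1{x_l = e_k}, and let f : 𝒳^{L+1} → [−C, C]. Define A = E_{X∼ρ}[ Σ_{l=M+1}^{L}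 σ_l(a·t) · Σ_{k=1}^{d} ( 1{x_{L+1}=x_l=e_k}/(y(k)+ε) − y(k)·1{x_{L+1}=e_k}/(y(k)+ε) ) · f(X) ] and B = E_{X∼ρ}[ (L−M)^{−1} Σ_{l=M+1}^{L} Σ_{k=1}^{d} ( 1{x_{L+1}=x_l=e_k}/(ȳ(k)+ε) − ȳ(k)·1{x_{L+1}=e_k}/(ȳ(k)+ε) ) · f(X) ]. Then |A − B| ≤ 8Cad/ε². -/
open Finset

/-! The scores `a·t_l` lie in `[0, a]`, so every `exp(a·t_l)` lies in `[1, 1 + 2a]` and the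
softmax weights are within relative error `2a` of the uniform weight `1/(L-M)`; consequently the
frequencies `y(k)` and `ȳ(k)` differ by at most `2a`. Each summand `σ_l · g(y)` with
`g(y) = (1{x_{L+1}=x_l=e_k} - y·1{x_{L+1}=e_k})/(y+ε)` satisfies `|g| ≤ 2/ε²` and is
`2/ε²`-Lipschitz in `y`, so it moves by at most `8a/((L-M)ε²)`; summing over `l` and `k` and
averaging over `ρ` gives `8Cad/ε²`. -/

theorem abs_exp_div_sum_exp_sub_inv_card_le {ι : Type*} [Fintype ι] [Nonempty ι]
    {s : ι → ℝ} {a : ℝ} (ha : a ≤ 1) (hs : ∀ i, 0 ≤ s i ∧ s i ≤ a) (i : ι) :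
    |Real.exp (s i) / ∑ j, Real.exp (s j) - (Fintype.card ι : ℝ)⁻¹|
      ≤ 2 * a * (Fintype.card ι : ℝ)⁻¹ := by
  set n : ℝ := (Fintype.card ι : ℝ)
  have hn : 0 < n := by simp [n, Fintype.card_pos]
  have hexp : ∀ j, 1 ≤ Real.exp (s j) ∧ Real.exp (s j) ≤ 1 + 2 * a := fun j => by
    have hsj := hs j
    have h := Real.abs_exp_sub_one_le (x := s j) (by rw [abs_of_nonneg hsj.1]; linarith)
    rw [abs_of_nonneg hsj.1, abs_of_nonneg (by linarith [Real.one_le_exp hsj.1])] at h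
    exact ⟨Real.one_le_exp hsj.1, by linarith⟩
  set D := ∑ j, Real.exp (s j)
  have hD1 : n ≤ D := by
    simpa [n] using card_nsmul_le_sum univ _ 1 fun j _ => (hexp j).1
  have hD2 : D ≤ n * (1 + 2 * a) :=
    (sum_le_card_nsmul univ _ _ fun j _ => (hexp j).2).trans_eq (by rw [nsmul_eq_mul, card_univ])
  have hD : 0 < D := hn.trans_le hD1
  have hnum : |n * Real.exp (s i) - D| ≤ 2 * a * D :=
    abs_le.mpr ⟨by nlinarith [hexp i], by nlinarith [hexp i]⟩
  calc |Real.exp (s i) / D - n⁻¹| = |n * Real.exp (s i) - D| / (n * D) := by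
        rw [← abs_of_pos (mul_pos hn hD), ← abs_div]
        congr 1
        field_simp
    _ ≤ 2 * a * D / (n * D) := by gcongr
    _ = 2 * a * n⁻¹ := by field_simp

section TokenFreq

variable {ι κ : Type*} [Fintype ι] [DecidableEq κ]

def tokenFreq (w : ι → ℝ) (x : ι → κ) (k : κ) : ℝ :=
  ∑ i, w i * if x i = k then 1 else 0

theorem tokenFreq_nonneg {w : ι → ℝ} (hw : ∀ i, 0 ≤ w i) (x : ι → κ) (k : κ) :
    0 ≤ tokenFreq w x k :=
  sum_nonneg fun i _ => mul_nonneg (hw i) (by split_ifs <;> norm_num)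

theorem tokenFreq_le_one {w : ι → ℝ} (hw : ∀ i, 0 ≤ w i) (hw1 : ∑ i, w i = 1)
    (x : ι → κ) (k : κ) : tokenFreq w x k ≤ 1 :=
  hw1 ▸ sum_le_sum fun i _ => mul_le_of_le_one_right (hw i) (by split_ifs <;> norm_num)

theorem abs_tokenFreq_sub_tokenFreq_le (w v : ι → ℝ) (x : ι → κ) (k : κ) :
    |tokenFreq w x k - tokenFreq v x k| ≤ ∑ i, |w i - v i| := by
  rw [tokenFreq, tokenFreq, ← sum_sub_distrib]
  refine (abs_sum_le_sum_abs _ _).trans (sum_le_sum fun i _ => ?_)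
  rw [← sub_mul, abs_mul]
  exact mul_le_of_le_one_right (abs_nonneg _) (by split_ifs <;> norm_num)

theorem sum_ite_div_eq_tokenFreq (x : ι → κ) (n : ℝ) (k : κ) :
    (∑ i, if x i = k then (1 : ℝ) else 0) / n = tokenFreq (fun _ => n⁻¹) x k := by
  rw [tokenFreq, sum_div]
  exact sum_congr rfl fun i _ => by rw [div_eq_inv_mul]

end TokenFreq

/-- `i₁` and `i₂` stand for the indicators `1{x_{L+1}=x_l=e_k}` and `1{x_{L+1}=e_k}`. -/
noncomputable def gradCoeff (ε i₁ i₂ y : ℝ) : ℝ :=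
  i₁ / (y + ε) - y * i₂ / (y + ε)

theorem abs_gradCoeff_le {ε i₁ i₂ y : ℝ} (hε0 : 0 < ε) (hε1 : ε ≤ 1)
    (hi₁ : 0 ≤ i₁ ∧ i₁ ≤ 1) (hi₂ : 0 ≤ i₂ ∧ i₂ ≤ 1) (hy : 0 ≤ y ∧ y ≤ 1) :
    |gradCoeff ε i₁ i₂ y| ≤ 2 / ε ^ 2 := by
  obtain ⟨hi₁0, hi₁1⟩ := hi₁
  obtain ⟨hi₂0, hi₂1⟩ := hi₂
  obtain ⟨hy0, hy1⟩ := hy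
  have hyε : 0 < y + ε := by linarith
  have h1 : |i₁ / (y + ε)| ≤ 1 / ε ^ 2 := by
    rw [abs_of_nonneg (by positivity)]
    exact div_le_div₀ zero_le_one hi₁1 (by positivity) (by nlinarith)
  have h2 : |y * i₂ / (y + ε)| ≤ 1 / ε ^ 2 := by
    rw [abs_of_nonneg (by positivity), div_le_div_iff₀ hyε (by positivity)]
    nlinarith [mul_le_one₀ hy1 hi₂0 hi₂1, pow_le_one₀ (n := 2) hε0.le hε1]
  calc |gradCoeff ε i₁ i₂ y| ≤ |i₁ / (y + ε)| + |y * i₂ / (y + ε)| := abs_sub _ _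
    _ ≤ 2 / ε ^ 2 := by rw [show 2 / ε ^ 2 = 1 / ε ^ 2 + 1 / ε ^ 2 by ring]; linarith

theorem abs_gradCoeff_sub_gradCoeff_le {ε i₁ i₂ y y' : ℝ} (hε0 : 0 < ε) (hε1 : ε ≤ 1)
    (hi₁ : 0 ≤ i₁ ∧ i₁ ≤ 1) (hi₂ : 0 ≤ i₂ ∧ i₂ ≤ 1) (hy : 0 ≤ y) (hy' : 0 ≤ y') :
    |gradCoeff ε i₁ i₂ y - gradCoeff ε i₁ i₂ y'| ≤ 2 * |y - y'| / ε ^ 2 := by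
  obtain ⟨hi₁0, hi₁1⟩ := hi₁
  obtain ⟨hi₂0, hi₂1⟩ := hi₂
  have hden : ε ^ 2 ≤ (y + ε) * (y' + ε) := by nlinarith
  have hdiff : gradCoeff ε i₁ i₂ y - gradCoeff ε i₁ i₂ y'
      = (y - y') * (-(i₁ + ε * i₂)) / ((y + ε) * (y' + ε)) := by
    rw [gradCoeff, gradCoeff]
    field_simp
    ring
  rw [hdiff, abs_div, abs_mul, abs_neg, abs_of_pos (by positivity : 0 < (y + ε) * (y' + ε)),
    abs_of_nonneg (by positivity : 0 ≤ i₁ + ε * i₂)]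
  calc |y - y'| * (i₁ + ε * i₂) / ((y + ε) * (y' + ε)) ≤ |y - y'| * 2 / ε ^ 2 := by
        gcongr
        nlinarith
    _ = 2 * |y - y'| / ε ^ 2 := by ring

theorem abs_mul_gradCoeff_sub_mul_gradCoeff_le {ε i₁ i₂ σ u y y' : ℝ} (hε0 : 0 < ε)
    (hε1 : ε ≤ 1) (hi₁ : 0 ≤ i₁ ∧ i₁ ≤ 1) (hi₂ : 0 ≤ i₂ ∧ i₂ ≤ 1) (hu : 0 ≤ u)
    (hy : 0 ≤ y ∧ y ≤ 1) (hy' : 0 ≤ y') :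
    |σ * gradCoeff ε i₁ i₂ y - u * gradCoeff ε i₁ i₂ y'|
      ≤ 2 * (|σ - u| + u * |y - y'|) / ε ^ 2 := by
  have hsplit : σ * gradCoeff ε i₁ i₂ y - u * gradCoeff ε i₁ i₂ y'
      = (σ - u) * gradCoeff ε i₁ i₂ y + u * (gradCoeff ε i₁ i₂ y - gradCoeff ε i₁ i₂ y') := by
    ring
  calc |σ * gradCoeff ε i₁ i₂ y - u * gradCoeff ε i₁ i₂ y'|
      ≤ |(σ - u) * gradCoeff ε i₁ i₂ y|
        + |u * (gradCoeff ε i₁ i₂ y - gradCoeff ε i₁ i₂ y')| := hsplit ▸ abs_add_le _ _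
    _ = |σ - u| * |gradCoeff ε i₁ i₂ y|
        + u * |gradCoeff ε i₁ i₂ y - gradCoeff ε i₁ i₂ y'| := by
        rw [abs_mul, abs_mul, abs_of_nonneg hu]
    _ ≤ |σ - u| * (2 / ε ^ 2) + u * (2 * |y - y'| / ε ^ 2) := by
        gcongr
        · exact abs_gradCoeff_le hε0 hε1 hi₁ hi₂ hy
        · exact abs_gradCoeff_sub_gradCoeff_le hε0 hε1 hi₁ hi₂ hy.1 hy'
    _ = 2 * (|σ - u| + u * |y - y'|) / ε ^ 2 := by ring

theorem abs_sum_mul_gradCoeff_sub_uniform_le {ι κ : Type*} [Fintype ι] [Nonempty ι]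
    [Fintype κ] [DecidableEq κ] {n a ε : ℝ} (hn : (Fintype.card ι : ℝ) = n)
    (hε0 : 0 < ε) (hε1 : ε ≤ 1) {σ : ι → ℝ} (hσ0 : ∀ i, 0 ≤ σ i) (hσ1 : ∑ i, σ i = 1)
    (hσ : ∀ i, |σ i - n⁻¹| ≤ 2 * a * n⁻¹) (x : ι → κ) (q : κ) (c : ℝ) :
    |∑ i, σ i * ∑ k, gradCoeff ε (if q = k ∧ x i = k then 1 else 0) (if q = k then 1 else 0)
          (tokenFreq σ x k) * c
      - (∑ i, ∑ k, gradCoeff ε (if q = k ∧ x i = k then 1 else 0) (if q = k then 1 else 0)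
          ((∑ j, if x j = k then (1 : ℝ) else 0) / n) * c) / n|
      ≤ 8 * |c| * a * Fintype.card κ / ε ^ 2 := by
  subst hn
  set n : ℝ := (Fintype.card ι : ℝ)
  have hn : 0 < n := by simp [n, Fintype.card_pos]
  set u : ℝ := n⁻¹
  have hu : 0 ≤ u := by positivity
  have hyy : ∀ k, |tokenFreq σ x k - tokenFreq (fun _ => u) x k| ≤ 2 * a := fun k =>
    (abs_tokenFreq_sub_tokenFreq_le σ _ x k).trans <|
      (sum_le_sum fun i _ => hσ i).trans_eq (by simp [u, n]; field_simp)
  have hterm : ∀ i k,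
      |σ i * gradCoeff ε (if q = k ∧ x i = k then 1 else 0) (if q = k then 1 else 0)
          (tokenFreq σ x k)
        - u * gradCoeff ε (if q = k ∧ x i = k then 1 else 0) (if q = k then 1 else 0)
          (tokenFreq (fun _ => u) x k)| ≤ 8 * a * u / ε ^ 2 := fun i k => by
    refine (abs_mul_gradCoeff_sub_mul_gradCoeff_le hε0 hε1 (by split_ifs <;> norm_num)
      (by split_ifs <;> norm_num) hu ⟨tokenFreq_nonneg hσ0 x k, tokenFreq_le_one hσ0 hσ1 x k⟩
      (tokenFreq_nonneg (fun _ => hu) x k)).trans ?_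
    rw [div_le_div_iff_of_pos_right (by positivity)]
    nlinarith [hσ i, mul_le_mul_of_nonneg_left (hyy k) hu]
  simp only [sum_ite_div_eq_tokenFreq x n, sum_div, ← sum_sub_distrib, mul_sum]
  calc _ ≤ ∑ i : ι, ∑ k : κ, 8 * a * u / ε ^ 2 * |c| :=
        (abs_sum_le_sum_abs _ _).trans <| sum_le_sum fun i _ =>
          (abs_sum_le_sum_abs _ _).trans <| sum_le_sum fun k _ => by
            rw [← mul_assoc, div_eq_mul_inv _ n, mul_right_comm _ c, mul_comm _ n⁻¹, ← sub_mul,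
              abs_mul]
            exact mul_le_mul_of_nonneg_right (hterm i k) (abs_nonneg c)
    _ = 8 * |c| * a * Fintype.card κ / ε ^ 2 := by
        simp only [sum_const, card_univ, nsmul_eq_mul, u, n]
        field_simp

theorem abs_sum_mul_sub_sum_mul_le {Ω : Type*} [Fintype Ω] {ρ g h : Ω → ℝ} {b : ℝ}
    (hρ0 : ∀ X, 0 ≤ ρ X) (hρ1 : ∑ X, ρ X = 1) (hb : ∀ X, |g X - h X| ≤ b) :
    |∑ X, ρ X * g X - ∑ X, ρ X * h X| ≤ b := by
  rw [← sum_sub_distrib]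
  calc |∑ X, (ρ X * g X - ρ X * h X)| ≤ ∑ X, ρ X * b := by
        refine (abs_sum_le_sum_abs _ _).trans (sum_le_sum fun X _ => ?_)
        rw [← mul_sub, abs_mul, abs_of_nonneg (hρ0 X)]
        exact mul_le_mul_of_nonneg_left (hb X) (hρ0 X)
    _ = b := by rw [← sum_mul, hρ1, one_mul]

theorem statement11_general (d M L : ℕ) (hML : M + 2 ≤ L)
    (a ε C : ℝ) (ha0 : 0 ≤ a) (ha1 : a ≤ 1) (hε0 : 0 < ε) (hε1 : ε ≤ 1)
    (ρ : (Fin (L + 1) → Fin d) → ℝ) (hρ0 : ∀ X, 0 ≤ ρ X) (hρ1 : ∑ X, ρ X = 1)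
    (t : (Fin (L + 1) → Fin d) → ℕ → ℝ)
    (ht : ∀ X, ∀ l ∈ Finset.Ico M L, 0 ≤ t X l ∧ t X l ≤ 1)
    (f : (Fin (L + 1) → Fin d) → ℝ) (hf : ∀ X, |f X| ≤ C) :
    let σw : (Fin (L + 1) → Fin d) → {m // m ∈ Finset.Ico M L} → ℝ := fun X l =>
      Real.exp (a * t X l.1) / ∑ l' ∈ (Finset.Ico M L).attach, Real.exp (a * t X l'.1);
    let y : (Fin (L + 1) → Fin d) → Fin d → ℝ := fun X k =>
      ∑ l ∈ (Finset.Ico M L).attach, σw X l * (if X ⟨l.1, icoLtSucc l⟩ = k then 1 else 0);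
    let ybar : (Fin (L + 1) → Fin d) → Fin d → ℝ := fun X k =>
      (∑ l ∈ (Finset.Ico M L).attach, (if X ⟨l.1, icoLtSucc l⟩ = k then (1 : ℝ) else 0)) /
        ((L : ℝ) - M);
    let A := ∑ X : Fin (L + 1) → Fin d, ρ X *
      ∑ l ∈ (Finset.Ico M L).attach, σw X l *
        ∑ k : Fin d,
          ((if X ⟨L, Nat.lt_succ_self L⟩ = k ∧ X ⟨l.1, icoLtSucc l⟩ = k then (1 : ℝ) else 0) /
              (y X k + ε) -
            y X k * (if X ⟨L, Nat.lt_succ_self L⟩ = k then (1 : ℝ) else 0) / (y X k + ε)) * f X;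
    let B := ∑ X : Fin (L + 1) → Fin d, ρ X *
      ((∑ l ∈ (Finset.Ico M L).attach,
          ∑ k : Fin d,
            ((if X ⟨L, Nat.lt_succ_self L⟩ = k ∧ X ⟨l.1, icoLtSucc l⟩ = k then (1 : ℝ) else 0) /
                (ybar X k + ε) -
              ybar X k * (if X ⟨L, Nat.lt_succ_self L⟩ = k then (1 : ℝ) else 0) /
                (ybar X k + ε)) * f X) /
        ((L : ℝ) - M));
    |A - B| ≤ 8 * C * a * d / ε ^ 2 := by
  intro σw y ybar A B
  have hn : (Fintype.card {m // m ∈ Finset.Ico M L} : ℝ) = (L : ℝ) - M := by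
    rw [Fintype.card_coe, Nat.card_Ico, Nat.cast_sub (by omega)]
  have : Nonempty {m // m ∈ Finset.Ico M L} := ⟨⟨M, Finset.mem_Ico.mpr ⟨le_rfl, by omega⟩⟩⟩
  refine abs_sum_mul_sub_sum_mul_le hρ0 hρ1 fun X => ?_
  have hσ : ∀ l, |σw X l - ((L : ℝ) - M)⁻¹| ≤ 2 * a * ((L : ℝ) - M)⁻¹ := fun l => by
    rw [← hn]
    exact abs_exp_div_sum_exp_sub_inv_card_le (ι := {m // m ∈ Finset.Ico M L})
      (s := fun l => a * t X l.1) ha1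
      (fun l => ⟨mul_nonneg ha0 (ht X l l.2).1, mul_le_of_le_one_right ha0 (ht X l l.2).2⟩) l
  have hσ0 : ∀ l, 0 ≤ σw X l := fun l => by positivity
  have hσ1 : ∑ l, σw X l = 1 := by
    rw [← sum_div]
    exact div_self (sum_pos (fun l _ => Real.exp_pos _) univ_nonempty).ne'
  refine (abs_sum_mul_gradCoeff_sub_uniform_le hn hε0 hε1 hσ0 hσ1 hσ
    (fun l => X ⟨l.1, icoLtSucc l⟩) (X ⟨L, Nat.lt_succ_self L⟩) (f X)).trans ?_
  rw [Fintype.card_fin]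
  gcongr
  exact hf X

/-- Replacing the attention probabilities `σ_l(a·t)` by the uniform average
(and the attention-weighted token frequency `y` by the uniform frequency `ȳ`) incurs an error
of at most `8Cad/ε²` in the gradient-type expectation, for any sequence distribution `ρ`,
scores `t_l ∈ [0,1]`, `a ∈ [0,1]`, `ε ∈ (0,1]` and `|f| ≤ C`. -/
theorem statement11 (d M L : ℕ) (hd : 0 < d) (hML : M + 2 ≤ L)
    (a ε C : ℝ) (ha0 : 0 ≤ a) (ha1 : a ≤ 1) (hε0 : 0 < ε) (hε1 : ε ≤ 1) (hC : 0 < C)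
    (ρ : (Fin (L + 1) → Fin d) → ℝ) (hρ0 : ∀ X, 0 ≤ ρ X) (hρ1 : ∑ X, ρ X = 1)
    (t : (Fin (L + 1) → Fin d) → ℕ → ℝ)
    (ht : ∀ X, ∀ l ∈ Finset.Ico M L, 0 ≤ t X l ∧ t X l ≤ 1)
    (f : (Fin (L + 1) → Fin d) → ℝ) (hf : ∀ X, |f X| ≤ C) :
    let σw : (Fin (L + 1) → Fin d) → {m // m ∈ Finset.Ico M L} → ℝ := fun X l =>
      Real.exp (a * t X l.1) / ∑ l' ∈ (Finset.Ico M L).attach, Real.exp (a * t X l'.1);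
    let y : (Fin (L + 1) → Fin d) → Fin d → ℝ := fun X k =>
      ∑ l ∈ (Finset.Ico M L).attach, σw X l * (if X ⟨l.1, icoLtSucc l⟩ = k then 1 else 0);
    let ybar : (Fin (L + 1) → Fin d) → Fin d → ℝ := fun X k =>
      (∑ l ∈ (Finset.Ico M L).attach, (if X ⟨l.1, icoLtSucc l⟩ = k then (1 : ℝ) else 0)) /
        ((L : ℝ) - M);
    let A := ∑ X : Fin (L + 1) → Fin d, ρ X *
      ∑ l ∈ (Finset.Ico M L).attach, σw X l *
        ∑ k : Fin d,
          ((if X ⟨L, Nat.lt_succ_self L⟩ = k ∧ X ⟨l.1, icoLtSucc l⟩ = k then (1 : ℝ) else 0) /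
              (y X k + ε) -
            y X k * (if X ⟨L, Nat.lt_succ_self L⟩ = k then (1 : ℝ) else 0) / (y X k + ε)) * f X;
    let B := ∑ X : Fin (L + 1) → Fin d, ρ X *
      ((∑ l ∈ (Finset.Ico M L).attach,
          ∑ k : Fin d,
            ((if X ⟨L, Nat.lt_succ_self L⟩ = k ∧ X ⟨l.1, icoLtSucc l⟩ = k then (1 : ℝ) else 0) /
                (ybar X k + ε) -
              ybar X k * (if X ⟨L, Nat.lt_succ_self L⟩ = k then (1 : ℝ) else 0) /
                (ybar X k + ε)) * f X) /
        ((L : ℝ) - M));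
    |A - B| ≤ 8 * C * a * d / ε ^ 2 :=
  statement11_general d M L hML a ε C ha0 ha1 hε0 hε1 ρ hρ0 hρ1 t ht f hf
end

section
/- Let μ be a probability distribution on 𝒳^{M+1} with μ(z = e) > 0 for every e ∈ 𝒳. Let S be a finite index set and let (i_h, j_h)_{h∈S} be pairs of indices in {1,…,M}², and let S₁ = {i_h : h ∈ S} and S₂ = {j_h : h ∈ S} be the sets of their distinct values. Let (x, X) and (z, Z) be independent, each distributed as μ, with X = (x_{−M},…,x_{−1}) and Z = (z_{−M},…,z_{−1}). Then E[ ∏_{h∈S} 1{x_{−i_h} = z_{−j_h}} · ( Σ_{k=1}^{d} 1{x = z = e_k}/μ(z = e_k) − 1 ) ] ≤ ( Ĩ_{χ²}(S₁) + Ĩ_{χ²}(S₂) ) / 2. -/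
open Finset

/-- The single-token marginal at the last coordinate of a distribution on `𝒳^{M+1}`. -/
noncomputable def tokenMarg (d M : ℕ) (μb : (Fin (M + 1) → Fin d) → ℝ) (e : Fin d) : ℝ :=
  ∑ y : Fin (M + 1) → Fin d, if y ⟨M, Nat.lt_succ_self M⟩ = e then μb y else 0

/-- The modified χ²-mutual information
`Ĩ_{χ²}(S) = Σ_E [ Σ_e μ(z = e, Z_{-S} = E)² / μ(z = e) - μ(Z_{-S} = E)² ]`. -/
noncomputable def modMI (d M : ℕ) (μb : (Fin (M + 1) → Fin d) → ℝ) (S : Finset ℕ) : ℝ :=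
  ∑ E : {s // s ∈ S} → Fin d,
    ((∑ e : Fin d,
        windowLaw d (M + 1) S μb M (Nat.lt_succ_self M) (e, E) ^ 2 / tokenMarg d M μb e) -
      (∑ e : Fin d, windowLaw d (M + 1) S μb M (Nat.lt_succ_self M) (e, E)) ^ 2)

/-!
Write `p` for the law of `z` and `Cov_p(u, v) = Σ_e u_e v_e / p_e - (Σ u)(Σ v)`.
Collapsing both samples to their windows, the expectation becomes
`Σ_{E₁, E₂} χ(E₁, E₂) Cov_p(u_{E₁}, v_{E₂})`, where `u_{E₁} = μ(z = ·, Z_{-S₁} = E₁)`,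
`v_{E₂} = μ(z = ·, Z_{-S₂} = E₂)` and `χ(E₁, E₂)` indicates that `E₁` and `E₂` agree along
the pairs `(i_h, j_h)`. As `Σ p = 1`, Cauchy–Schwarz makes `Cov_p` positive semidefinite, so
`2 Cov_p(u, v) ≤ Cov_p(u, u) + Cov_p(v, v)`, while `Ĩ_{χ²}(S₁) = Σ_{E₁} Cov_p(u_{E₁}, u_{E₁})`.
Finally `χ` is a partial matching: each `E₁` agrees with at most one `E₂` and vice versa,
since a tuple indexed by `S₂ = {j_h}` is determined by the values it must take at the `j_h`.
-/

lemma sum_sum_mul_add_le {A B : Type*} [Fintype A] [Fintype B] {χ : A → B → ℝ}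
    (hrow : ∀ a, ∑ b, χ a b ≤ 1) (hcol : ∀ b, ∑ a, χ a b ≤ 1)
    {U : A → ℝ} {V : B → ℝ} (hU : ∀ a, 0 ≤ U a) (hV : ∀ b, 0 ≤ V b) :
    ∑ a, ∑ b, χ a b * (U a + V b) ≤ ∑ a, U a + ∑ b, V b := by
  simp only [mul_add, sum_add_distrib]
  rw [sum_comm (f := fun a b => χ a b * V b)]
  simp only [← sum_mul]
  gcongr with a _ b
  · exact mul_le_of_le_one_left (hU a) (hrow a)
  · exact mul_le_of_le_one_left (hV b) (hcol b)

section ChiSquare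

variable {α : Type*} [Fintype α] {p : α → ℝ}

noncomputable def chiSqCov (p u v : α → ℝ) : ℝ :=
  ∑ k, u k * v k / p k - (∑ k, u k) * ∑ k, v k

/-- For a probability vector `p`, this is the variance of `v / p` under `p`. -/
noncomputable def chiSqVar (p v : α → ℝ) : ℝ :=
  ∑ k, v k ^ 2 / p k - (∑ k, v k) ^ 2

lemma chiSqVar_nonneg (hp : ∀ k, 0 < p k) (hp1 : ∑ k, p k = 1) (v : α → ℝ) :
    0 ≤ chiSqVar p v := by
  have := sq_sum_div_le_sum_sq_div univ v fun k _ => hp k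
  rw [hp1, div_one] at this
  exact sub_nonneg.mpr this

lemma chiSqVar_sub (u v : α → ℝ) :
    chiSqVar p (u - v) = chiSqVar p u + chiSqVar p v - 2 * chiSqCov p u v := by
  have expand : ∀ k,
      (u k - v k) ^ 2 / p k = u k ^ 2 / p k + v k ^ 2 / p k - 2 * (u k * v k / p k) :=
    fun k => by ring
  simp only [chiSqVar, chiSqCov, Pi.sub_apply, expand, sum_sub_distrib, sum_add_distrib,
    ← mul_sum]
  ring

lemma chiSqCov_le (hp : ∀ k, 0 < p k) (hp1 : ∑ k, p k = 1) (u v : α → ℝ) :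
    chiSqCov p u v ≤ (chiSqVar p u + chiSqVar p v) / 2 := by
  linarith [chiSqVar_nonneg hp hp1 (u - v), chiSqVar_sub (p := p) u v]

variable [DecidableEq α]

noncomputable def diagKernel (p : α → ℝ) (e e' : α) : ℝ :=
  ∑ k, (if e = k ∧ e' = k then (1 : ℝ) else 0) / p k

lemma diagKernel_eq (e e' : α) : diagKernel p e e' = if e = e' then 1 / p e else 0 := by
  split_ifs with h
  · subst h
    simp [diagKernel, ite_div]
  · exact sum_eq_zero fun k _ => by rw [if_neg fun hk => h (hk.1.trans hk.2.symm), zero_div]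

lemma sum_sum_mul_diagKernel_sub_one (u v : α → ℝ) :
    ∑ e, ∑ e', u e * v e' * (diagKernel p e e' - 1) = chiSqCov p u v := by
  simp only [diagKernel_eq]
  simp [chiSqCov, mul_sub, sum_sub_distrib, sum_mul_sum, div_eq_mul_inv]

lemma sum_sum_mul_diagKernel_le {A B : Type*} [Fintype A] [Fintype B]
    (hp : ∀ k, 0 < p k) (hp1 : ∑ k, p k = 1) (g : α × A → ℝ) (h : α × B → ℝ)
    {χ : A → B → ℝ} (hχ : ∀ a b, 0 ≤ χ a b)
    (hrow : ∀ a, ∑ b, χ a b ≤ 1) (hcol : ∀ b, ∑ a, χ a b ≤ 1) :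
    ∑ w, ∑ w', g w * h w' * (χ w.2 w'.2 * (diagKernel p w.1 w'.1 - 1)) ≤
      (∑ a, chiSqVar p (fun e => g (e, a)) + ∑ b, chiSqVar p (fun e => h (e, b))) / 2 := by
  calc _ = ∑ a, ∑ b, χ a b * chiSqCov p (fun e => g (e, a)) (fun e => h (e, b)) := by
        simp only [← sum_sum_mul_diagKernel_sub_one, mul_sum, Fintype.sum_prod_type_right]
        refine sum_congr rfl fun a _ => ?_
        rw [sum_comm]
        exact sum_congr rfl fun b _ => sum_congr rfl fun e _ => sum_congr rfl fun e' _ => by ring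
    _ ≤ ∑ a, ∑ b, χ a b *
          ((chiSqVar p (fun e => g (e, a)) + chiSqVar p (fun e => h (e, b))) / 2) := by
        gcongr with a _ b
        exacts [hχ a b, chiSqCov_le hp hp1 _ _]
    _ ≤ _ := by
        simp only [mul_div_assoc', ← sum_div]
        gcongr
        exact sum_sum_mul_add_le hrow hcol (fun a => chiSqVar_nonneg hp hp1 _)
          (fun b => chiSqVar_nonneg hp hp1 _)

end ChiSquare

lemma sum_windowLaw_mul (d T : ℕ) (S : Finset ℕ) (q : (Fin T → Fin d) → ℝ) (l0 : ℕ)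
    (hl : l0 < T) (F : Fin d × ({s // s ∈ S} → Fin d) → ℝ) :
    ∑ w, windowLaw d T S q l0 hl w * F w = ∑ x, q x * F (window d T S x l0 hl) := by
  simp only [windowLaw, sum_mul, ite_mul, zero_mul]
  rw [sum_comm]
  simp

lemma sum_sum_windowLaw_mul (d T : ℕ) (S S' : Finset ℕ) (q q' : (Fin T → Fin d) → ℝ)
    (l0 l0' : ℕ) (hl : l0 < T) (hl' : l0' < T)
    (F : Fin d × ({s // s ∈ S} → Fin d) → Fin d × ({s // s ∈ S'} → Fin d) → ℝ) :
    ∑ w, ∑ w', windowLaw d T S q l0 hl w * windowLaw d T S' q' l0' hl' w' * F w w' =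
      ∑ x, ∑ x', q x * q' x' * F (window d T S x l0 hl) (window d T S' x' l0' hl') := by
  simp only [mul_assoc, ← mul_sum, sum_windowLaw_mul]

lemma sum_tokenMarg (d M : ℕ) (μb : (Fin (M + 1) → Fin d) → ℝ) :
    ∑ e, tokenMarg d M μb e = ∑ y, μb y := by
  simp only [tokenMarg]
  rw [sum_comm]
  simp

section Matching

variable {ι β γ : Type*} [Fintype ι] [DecidableEq β] [DecidableEq γ]

def matchIndicator (i j : ι → β) (E₁ : {s // s ∈ univ.image i} → γ)
    (E₂ : {s // s ∈ univ.image j} → γ) : ℝ :=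
  ∏ h, if E₁ ⟨i h, mem_image_of_mem i (mem_univ h)⟩ = E₂ ⟨j h, mem_image_of_mem j (mem_univ h)⟩
    then 1 else 0

lemma matchIndicator_nonneg (i j : ι → β) (E₁ : {s // s ∈ univ.image i} → γ)
    (E₂ : {s // s ∈ univ.image j} → γ) : 0 ≤ matchIndicator i j E₁ E₂ :=
  prod_nonneg fun _ _ => by split_ifs <;> norm_num

lemma matchIndicator_comm (i j : ι → β) (E₁ : {s // s ∈ univ.image i} → γ)
    (E₂ : {s // s ∈ univ.image j} → γ) :
    matchIndicator i j E₁ E₂ = matchIndicator j i E₂ E₁ := by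
  simp only [matchIndicator, eq_comm]

variable [Fintype γ]

lemma sum_matchIndicator_le_one (i j : ι → β) (E₁ : {s // s ∈ univ.image i} → γ) :
    ∑ E₂, matchIndicator i j E₁ E₂ ≤ 1 := by
  simp only [matchIndicator, Fintype.prod_boole, sum_boole]
  norm_cast
  refine card_le_one.mpr fun E₂ hE₂ E₂' hE₂' => funext fun ⟨s, hs⟩ => ?_
  obtain ⟨h, -, rfl⟩ := mem_image.mp hs
  exact ((mem_filter.mp hE₂).2 h).symm.trans ((mem_filter.mp hE₂').2 h)

end Matching

theorem statement14_general (d M : ℕ)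
    (μb : (Fin (M + 1) → Fin d) → ℝ) (hsum : ∑ y, μb y = 1)
    (htm : ∀ e, 0 < tokenMarg d M μb e)
    (ι : Type) [Fintype ι]
    (i j : ι → ℕ) :
    (∑ y : Fin (M + 1) → Fin d, ∑ y' : Fin (M + 1) → Fin d,
        μb y * μb y' *
          ((∏ h : ι,
              (if y ⟨M - i h, Nat.lt_succ_of_le (Nat.sub_le _ _)⟩ =
                  y' ⟨M - j h, Nat.lt_succ_of_le (Nat.sub_le _ _)⟩ then (1 : ℝ) else 0)) *
            ((∑ k : Fin d,
                (if y ⟨M, Nat.lt_succ_self M⟩ = k ∧ y' ⟨M, Nat.lt_succ_self M⟩ = k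
                  then (1 : ℝ) else 0) / tokenMarg d M μb k) - 1)))
      ≤ (modMI d M μb (Finset.univ.image i) + modMI d M μb (Finset.univ.image j)) / 2 := by
  calc _ = _ := (sum_sum_windowLaw_mul d (M + 1) _ _ μb μb M M _ _ fun w w' =>
          matchIndicator i j w.2 w'.2 * (diagKernel (tokenMarg d M μb) w.1 w'.1 - 1)).symm
    _ ≤ _ := sum_sum_mul_diagKernel_le htm ((sum_tokenMarg d M μb).trans hsum) _ _
          (matchIndicator_nonneg i j) (sum_matchIndicator_le_one i j) fun E₂ => by
            simpa only [matchIndicator_comm i j _ E₂] using sum_matchIndicator_le_one j i E₂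

/-- For independent samples `(x,X), (z,Z)` from `μ` and index pairs
`(i_h, j_h)_{h∈S}` with distinct-value sets `S₁, S₂`,
`E[ ∏_h 1{x_{−i_h} = z_{−j_h}} · (Σ_k 1{x=z=e_k}/μ(z=e_k) − 1) ] ≤ (Ĩ_{χ²}(S₁)+Ĩ_{χ²}(S₂))/2`. -/
theorem statement14 (d M : ℕ) (hd : 0 < d) (hM : 0 < M)
    (μb : (Fin (M + 1) → Fin d) → ℝ) (hnn : ∀ y, 0 ≤ μb y) (hsum : ∑ y, μb y = 1)
    (htm : ∀ e, 0 < tokenMarg d M μb e)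
    (ι : Type) [Fintype ι] [DecidableEq ι]
    (i j : ι → ℕ) (hi : ∀ h, 1 ≤ i h ∧ i h ≤ M) (hj : ∀ h, 1 ≤ j h ∧ j h ≤ M) :
    (∑ y : Fin (M + 1) → Fin d, ∑ y' : Fin (M + 1) → Fin d,
        μb y * μb y' *
          ((∏ h : ι,
              (if y ⟨M - i h, Nat.lt_succ_of_le (Nat.sub_le _ _)⟩ =
                  y' ⟨M - j h, Nat.lt_succ_of_le (Nat.sub_le _ _)⟩ then (1 : ℝ) else 0)) *
            ((∑ k : Fin d,
                (if y ⟨M, Nat.lt_succ_self M⟩ = k ∧ y' ⟨M, Nat.lt_succ_self M⟩ = k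
                  then (1 : ℝ) else 0) / tokenMarg d M μb k) - 1)))
      ≤ (modMI d M μb (Finset.univ.image i) + modMI d M μb (Finset.univ.image j)) / 2 :=
  statement14_general d M μb hsum htm ι i j
end

section
/- Let μ be a probability distribution on 𝒳^{M+1} with μ(z = e) > 0 for every e ∈ 𝒳, let (x, X) and (z, Z) be independent with common distribution μ (X = (x_{−M},…,x_{−1}), Z = (z_{−M},…,z_{−1})). Let S be a finite index set, and for each h ∈ S let σ^{(h)} and σ̃^{(h)} be probability vectors on {1,…,M}; set v^{(h)}(X) = Σ_{j=1}^{M} σ^{(h)}_{−j} x_{−j} and ṽ^{(h)}(Z) = Σ_{i=1}^{M} σ̃^{(h)}_{−i} z_{−i}. Fix indices (i*_h, j*_h)_{h∈S} in {1,…,M}², let Π = ∏_{h∈S} σ^{(h)}_{−i*_h} · σ̃^{(h)}_{−j*_h}, and let Ĩ_max = max{ Ĩ_{χ²}(S′) : S′ ⊆ {1,…,M}, |S′| ≤ |S| }. Define A = E[ ( Σ_{k=1}^{d} 1{x = z = e_k}/μ(z = e_k) − 1 ) · ∏_{h∈S} ⟨ṽ^{(h)}(Z), v^{(h)}(X)⟩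 ] and B = E[ ∏_{h∈S} 1{x_{−i*_h} = z_{−j*_h}} · ( Σ_{k=1}^{d} 1{x = z = e_k}/μ(z = e_k) − 1 ) ]. Then | A − Π·B | ≤ (1 − Π) · Ĩ_max. -/
open Finset

/-!
Expanding each inner product as
`⟨ṽ^{(h)}(Z), v^{(h)}(X)⟩ = Σ_{i,j} σ^{(h)}_{-i} σ̃^{(h)}_{-j} 1{x_{-i} = z_{-j}}`
writes `A` as a convex combination of the scores
`T(i, j) = E[∏_h 1{x_{-i_h} = z_{-j_h}} (Σ_k 1{x = z = e_k}/μ(z = e_k) − 1)]`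
with weights `∏_h σ^{(h)}_{-i_h} σ̃^{(h)}_{-j_h}`; `B = T(i*, j*)` carries the weight `Π`, so it
suffices to bound every score by `Ĩ_max`.

Splitting according to the common value `F` of the lagged tokens gives `T(i, j) = Σ_F Q(a_F, b_F)`,
where `a_F k = μ(z = e_k, Z_{-i} = F)`, `b_F k = μ(z = e_k, Z_{-j} = F)` and
`Q(a, b) = Σ_k a_k b_k / μ(z = e_k) − (Σ a)(Σ b)`. By Cauchy–Schwarz `Q` is positive semidefinite,
so `|Q(a, b)| ≤ (Q(a, a) + Q(b, b)) / 2`, and `Σ_F Q(a_F, a_F)` is the modified χ²-mutual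
information of the set of offsets `{i_h}`, which has at most `|S|` elements.
-/

section ChiSqForm

variable {κ : Type*} [Fintype κ]

noncomputable def chiSqForm (p a b : κ → ℝ) : ℝ :=
  ∑ k, a k * b k / p k - (∑ k, a k) * ∑ k, b k

lemma chiSqForm_zero (p : κ → ℝ) : chiSqForm p 0 0 = 0 := by
  simp [chiSqForm]

lemma chiSqForm_self_nonneg {p : κ → ℝ} (hp : ∀ k, 0 < p k) (hp1 : ∑ k, p k = 1)
    (a : κ → ℝ) : 0 ≤ chiSqForm p a a := by
  have := Finset.sq_sum_div_le_sum_sq_div Finset.univ a fun k _ => hp k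
  rw [hp1, div_one] at this
  simpa [chiSqForm, sq] using this

lemma abs_chiSqForm_le {p : κ → ℝ} (hp : ∀ k, 0 < p k) (hp1 : ∑ k, p k = 1) (a b : κ → ℝ) :
    |chiSqForm p a b| ≤ (chiSqForm p a a + chiSqForm p b b) / 2 := by
  have hadd := chiSqForm_self_nonneg hp hp1 (a + b)
  have hsub := chiSqForm_self_nonneg hp hp1 (a - b)
  simp only [chiSqForm, Pi.add_apply, Pi.sub_apply, add_mul, mul_add, sub_mul, mul_sub, add_div,
    sub_div, Finset.sum_add_distrib, Finset.sum_sub_distrib] at *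
  simp only [mul_comm (b _) (a _)] at *
  rw [abs_le]
  constructor <;> nlinarith

end ChiSqForm

section FiniteLaw

variable {Ω κ β : Type*} [Fintype Ω] [DecidableEq κ] [DecidableEq β]

noncomputable def law {α : Type*} [DecidableEq α] (μ : Ω → ℝ) (V : Ω → α) (a : α) : ℝ :=
  ∑ ω, if V ω = a then μ ω else 0

lemma sum_law_mul {α : Type*} [Fintype α] [DecidableEq α] (μ : Ω → ℝ) (V : Ω → α)
    (F : α → ℝ) : ∑ a, law μ V a * F a = ∑ ω, μ ω * F (V ω) := by
  simp only [law, Finset.sum_mul, ite_mul, zero_mul]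
  rw [Finset.sum_comm]
  simp

lemma sum_law [Fintype κ] (μ : Ω → ℝ) (V : Ω → κ) : ∑ k, law μ V k = ∑ ω, μ ω := by
  simpa using sum_law_mul μ V fun _ => 1

lemma sum_law_pair [Fintype κ] (μ : Ω → ℝ) (X : Ω → κ) (Y : Ω → β) (b : β) :
    ∑ k, law μ (fun ω => (X ω, Y ω)) (k, b) = law μ Y b := by
  unfold law
  rw [Finset.sum_comm]
  simp [ite_and]

lemma sum_law_slice_comp_injective {γ : Type*} [Fintype β] [Fintype γ] [DecidableEq γ]
    {Φ : β → γ} (hΦ : Function.Injective Φ) (F : (κ → ℝ) → ℝ) (hF : F 0 = 0)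
    (μ : Ω → ℝ) (X : Ω → κ) (Y : Ω → β) :
    ∑ c, F (fun k => law μ (fun ω => (X ω, Φ (Y ω))) (k, c)) =
      ∑ b, F (fun k => law μ (fun ω => (X ω, Y ω)) (k, b)) := by
  refine (Fintype.sum_of_injective Φ hΦ _ _ (fun c hc => ?_) fun b => ?_).symm
  · have hzero : (fun k => law μ (fun ω => (X ω, Φ (Y ω))) (k, c)) = 0 :=
      funext fun k => Finset.sum_eq_zero fun ω _ => if_neg fun h => hc ⟨Y ω, (Prod.mk.inj h).2⟩
    rw [hzero, hF]
  · simp only [law, Prod.mk.injEq, hΦ.eq_iff]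

lemma sum_sum_mul_indicator_eq_sum_chiSqForm [Fintype κ] [Fintype β] (μ : Ω → ℝ) (p : κ → ℝ)
    (X : Ω → κ) (Y Y' : Ω → β) :
    ∑ ω, ∑ ω', μ ω * μ ω' * ((if Y ω = Y' ω' then (1 : ℝ) else 0) *
        ((∑ k, (if X ω = k ∧ X ω' = k then (1 : ℝ) else 0) / p k) - 1)) =
      ∑ b, chiSqForm p (fun k => law μ (fun ω => (X ω, Y ω)) (k, b))
        (fun k => law μ (fun ω => (X ω, Y' ω)) (k, b)) := by
  have hjoint : ∑ b, ∑ k, law μ (fun ω => (X ω, Y ω)) (k, b) *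
      law μ (fun ω => (X ω, Y' ω)) (k, b) / p k =
        ∑ ω, μ ω * (law μ (fun ω => (X ω, Y' ω)) (X ω, Y ω) / p (X ω)) := by
    rw [Finset.sum_comm, ← Fintype.sum_prod_type']
    simp only [Prod.mk.eta, mul_div_assoc]
    exact sum_law_mul μ _ fun x => law μ (fun ω => (X ω, Y' ω)) x / p x.1
  simp only [chiSqForm, sum_law_pair, Finset.sum_sub_distrib, hjoint, sum_law_mul]
  rw [← Finset.sum_sub_distrib]
  refine Finset.sum_congr rfl fun ω _ => ?_
  simp only [law, Finset.sum_div, Finset.mul_sum, ← Finset.sum_sub_distrib]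
  refine Finset.sum_congr rfl fun ω' _ => ?_
  by_cases hY : Y ω = Y' ω'
  · by_cases hX : X ω = X ω'
    · simp [hY, hX, ite_div]
      ring
    · simp [hY, Ne.symm hX, ite_and, ite_div]
  · simp [hY, Ne.symm hY]

end FiniteLaw

lemma sum_mul_sum_ite_eq {α κ : Type*} [Fintype κ] [DecidableEq κ] (s t : Finset α)
    (a b : α → ℝ) (u v : α → κ) :
    ∑ k, (∑ i ∈ s, a i * if u i = k then (1 : ℝ) else 0) *
        (∑ j ∈ t, b j * if v j = k then (1 : ℝ) else 0) =
      ∑ q ∈ s ×ˢ t, a q.1 * b q.2 * if v q.2 = u q.1 then (1 : ℝ) else 0 := by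
  simp only [Finset.sum_mul_sum, Finset.sum_product]
  rw [Finset.sum_comm]
  refine Finset.sum_congr rfl fun i _ => ?_
  rw [Finset.sum_comm]
  refine Finset.sum_congr rfl fun j _ => ?_
  simp [mul_ite, ite_mul, eq_comm]

lemma sum_sum_mul_prod_sum {Ω γ ι : Type*} [Fintype Ω] [Fintype ι] [DecidableEq ι]
    (μ : Ω → ℝ) (G : Ω → Ω → ℝ) (s : Finset γ) (c : ι → γ → ℝ) (I : ι → γ → Ω → Ω → ℝ) :
    ∑ ω, ∑ ω', μ ω * μ ω' * (G ω ω' * ∏ h, ∑ q ∈ s, c h q * I h q ω ω') =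
      ∑ P ∈ Fintype.piFinset fun _ => s, (∏ h, c h (P h)) *
        ∑ ω, ∑ ω', μ ω * μ ω' * ((∏ h, I h (P h) ω ω') * G ω ω') := by
  simp only [Finset.prod_univ_sum, Finset.prod_mul_distrib, Finset.mul_sum]
  rw [Finset.sum_congr rfl fun ω (_ : ω ∈ Finset.univ) => Finset.sum_comm, Finset.sum_comm]
  exact Finset.sum_congr rfl fun P _ => Finset.sum_congr rfl fun ω _ =>
    Finset.sum_congr rfl fun ω' _ => by ring

lemma sum_piFinset_prod_mul_eq_one {ι α : Type*} [Fintype ι] [DecidableEq ι] {s t : Finset α}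
    {a b : ι → α → ℝ} (ha : ∀ h, ∑ i ∈ s, a h i = 1) (hb : ∀ h, ∑ j ∈ t, b h j = 1) :
    ∑ P ∈ Fintype.piFinset (fun _ : ι => s ×ˢ t), ∏ h, a h (P h).1 * b h (P h).2 = 1 := by
  refine (Finset.sum_prod_piFinset _ fun h (q : α × α) => a h q.1 * b h q.2).trans
    (Finset.prod_eq_one fun h _ => ?_)
  rw [Finset.sum_product, ← Finset.sum_mul_sum, ha, hb, one_mul]

lemma abs_sum_mul_sub_le_s15 {α : Type*} [DecidableEq α] {s : Finset α} {w t : α → ℝ} {a : α}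
    {c : ℝ} (ha : a ∈ s) (hw : ∀ x ∈ s, 0 ≤ w x) (hw1 : ∑ x ∈ s, w x = 1)
    (ht : ∀ x ∈ s, |t x| ≤ c) :
    |∑ x ∈ s, w x * t x - w a * t a| ≤ (1 - w a) * c := by
  rw [← Finset.add_sum_erase s _ ha, add_sub_cancel_left, ← hw1, ← Finset.add_sum_erase s w ha,
    add_sub_cancel_left, Finset.sum_mul]
  refine (Finset.abs_sum_le_sum_abs _ _).trans (Finset.sum_le_sum fun x hx => ?_)
  have hwx := hw x (Finset.mem_of_mem_erase hx)
  rw [abs_mul, abs_of_nonneg hwx]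
  exact mul_le_mul_of_nonneg_left (ht x (Finset.mem_of_mem_erase hx)) hwx

section Attention

variable {d M : ℕ}

def lag (y : Fin (M + 1) → Fin d) (i : ℕ) : Fin d :=
  y ⟨M - i, Nat.lt_succ_of_le (Nat.sub_le _ _)⟩

variable (d M) (μb : (Fin (M + 1) → Fin d) → ℝ) {ι : Type*} [Fintype ι]

lemma modMI_eq_sum_chiSqForm (S : Finset ℕ) :
    modMI d M μb S = ∑ E, chiSqForm (tokenMarg d M μb)
      (fun e => windowLaw d (M + 1) S μb M (Nat.lt_succ_self M) (e, E))
      (fun e => windowLaw d (M + 1) S μb M (Nat.lt_succ_self M) (e, E)) := by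
  simp [modMI, chiSqForm, sq]

lemma modMI_image_eq [DecidableEq ι] (f : ι → ℕ) :
    modMI d M μb (Finset.image f Finset.univ) = ∑ F : ι → Fin d, chiSqForm (tokenMarg d M μb)
      (fun k => law μb (fun y => (y (Fin.last M), fun h => lag y (f h))) (k, F))
      (fun k => law μb (fun y => (y (Fin.last M), fun h => lag y (f h))) (k, F)) := by
  have hmem : ∀ h, f h ∈ Finset.image f Finset.univ :=
    fun h => Finset.mem_image_of_mem f (Finset.mem_univ h)
  have hΦ : Function.Injective
      fun (E : {s // s ∈ Finset.image f Finset.univ} → Fin d) h => E ⟨f h, hmem h⟩ := by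
    rintro E₁ E₂ hE
    funext ⟨s, hs⟩
    obtain ⟨h, -, rfl⟩ := Finset.mem_image.mp hs
    exact congrFun hE h
  rw [modMI_eq_sum_chiSqForm]
  exact (sum_law_slice_comp_injective hΦ (fun a => chiSqForm (tokenMarg d M μb) a a)
    (chiSqForm_zero _) μb (fun y => y (Fin.last M))
    (fun y => parents d (M + 1) _ y M (Nat.lt_succ_self M))).symm

noncomputable def lagScore (f g : ι → ℕ) : ℝ :=
  ∑ y, ∑ y', μb y * μb y' *
    ((∏ h, if lag y (f h) = lag y' (g h) then (1 : ℝ) else 0) *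
      ((∑ k, (if y (Fin.last M) = k ∧ y' (Fin.last M) = k then (1 : ℝ) else 0) /
        tokenMarg d M μb k) - 1))

lemma lagScore_eq_sum_chiSqForm [DecidableEq ι] (f g : ι → ℕ) :
    lagScore d M μb f g = ∑ F : ι → Fin d, chiSqForm (tokenMarg d M μb)
      (fun k => law μb (fun y => (y (Fin.last M), fun h => lag y (f h))) (k, F))
      (fun k => law μb (fun y => (y (Fin.last M), fun h => lag y (g h))) (k, F)) := by
  simp only [lagScore, Fintype.prod_boole, ← funext_iff]
  exact sum_sum_mul_indicator_eq_sum_chiSqForm μb _ (fun y => y (Fin.last M)) _ _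

lemma abs_lagScore_le (hsum : ∑ y, μb y = 1) (htm : ∀ e, 0 < tokenMarg d M μb e)
    (f g : ι → ℕ) :
    |lagScore d M μb f g| ≤
      (modMI d M μb (Finset.image f Finset.univ) + modMI d M μb (Finset.image g Finset.univ)) /
        2 := by
  classical
  have hp1 : ∑ k, tokenMarg d M μb k = 1 := (sum_law μb fun y => y (Fin.last M)).trans hsum
  rw [lagScore_eq_sum_chiSqForm, modMI_image_eq, modMI_image_eq, ← Finset.sum_add_distrib,
    Finset.sum_div]
  exact (Finset.abs_sum_le_sum_abs _ _).trans
    (Finset.sum_le_sum fun F _ => abs_chiSqForm_le htm hp1 _ _)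

lemma modMI_image_le_sup' (f : ι → ℕ) (hf : ∀ h, f h ∈ Finset.Icc 1 M)
    (hne : ((Finset.Icc 1 M).powerset.filter (fun S' => S'.card ≤ Fintype.card ι)).Nonempty) :
    modMI d M μb (Finset.image f Finset.univ) ≤
      ((Finset.Icc 1 M).powerset.filter (fun S' => S'.card ≤ Fintype.card ι)).sup' hne
        (modMI d M μb) := by
  refine Finset.le_sup' _ (Finset.mem_filter.mpr ⟨Finset.mem_powerset.mpr fun s hs => ?_, ?_⟩)
  · obtain ⟨h, -, rfl⟩ := Finset.mem_image.mp hs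
    exact hf h
  · exact Finset.card_image_le.trans Finset.card_univ.le

lemma abs_lagScore_le_sup' (hsum : ∑ y, μb y = 1) (htm : ∀ e, 0 < tokenMarg d M μb e)
    (f g : ι → ℕ) (hf : ∀ h, f h ∈ Finset.Icc 1 M) (hg : ∀ h, g h ∈ Finset.Icc 1 M)
    (hne : ((Finset.Icc 1 M).powerset.filter (fun S' => S'.card ≤ Fintype.card ι)).Nonempty) :
    |lagScore d M μb f g| ≤
      ((Finset.Icc 1 M).powerset.filter (fun S' => S'.card ≤ Fintype.card ι)).sup' hne
        (modMI d M μb) := by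
  have hf' := modMI_image_le_sup' d M μb f hf hne
  have hg' := modMI_image_le_sup' d M μb g hg hne
  linarith [abs_lagScore_le d M μb hsum htm f g]

end Attention

/-- Approximating the product of soft inner products
`∏_h ⟨ṽ^{(h)}(Z), v^{(h)}(X)⟩` by the hard indicator `∏_h 1{x_{−i*_h} = z_{−j*_h}}` weighted by
`Π = ∏_h σ^{(h)}_{−i*_h} σ̃^{(h)}_{−j*_h}` incurs an error of at most `(1 − Π)·Ĩ_max` in the
mutual-information-type expectation. -/
theorem statement15 (d M : ℕ)
    (μb : (Fin (M + 1) → Fin d) → ℝ) (hsum : ∑ y, μb y = 1)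
    (htm : ∀ e, 0 < tokenMarg d M μb e)
    (ι : Type) [Fintype ι]
    (σ σt : ι → ℕ → ℝ)
    (hσ : ∀ h, (∀ i, 0 ≤ σ h i) ∧ ∑ i ∈ Finset.Icc 1 M, σ h i = 1)
    (hσt : ∀ h, (∀ i, 0 ≤ σt h i) ∧ ∑ i ∈ Finset.Icc 1 M, σt h i = 1)
    (istar jstar : ι → ℕ)
    (hi : ∀ h, 1 ≤ istar h ∧ istar h ≤ M) (hj : ∀ h, 1 ≤ jstar h ∧ jstar h ≤ M) :
    let Pi := ∏ h : ι, σ h (istar h) * σt h (jstar h);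
    let Imax := ((Finset.Icc 1 M).powerset.filter
        (fun S' => S'.card ≤ Fintype.card ι)).sup'
      ⟨∅, Finset.mem_filter.mpr ⟨Finset.empty_mem_powerset _, by simp⟩⟩ (modMI d M μb);
    let A := ∑ y : Fin (M + 1) → Fin d, ∑ y' : Fin (M + 1) → Fin d,
      μb y * μb y' *
        (((∑ k : Fin d,
            (if y ⟨M, Nat.lt_succ_self M⟩ = k ∧ y' ⟨M, Nat.lt_succ_self M⟩ = k
              then (1 : ℝ) else 0) / tokenMarg d M μb k) - 1) *
          ∏ h : ι, ∑ kk : Fin d,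
            (∑ i2 ∈ Finset.Icc 1 M, σt h i2 *
                (if y' ⟨M - i2, Nat.lt_succ_of_le (Nat.sub_le _ _)⟩ = kk then (1 : ℝ) else 0)) *
            (∑ j2 ∈ Finset.Icc 1 M, σ h j2 *
                (if y ⟨M - j2, Nat.lt_succ_of_le (Nat.sub_le _ _)⟩ = kk then (1 : ℝ) else 0)));
    let B := ∑ y : Fin (M + 1) → Fin d, ∑ y' : Fin (M + 1) → Fin d,
      μb y * μb y' *
        ((∏ h : ι,
            (if y ⟨M - istar h, Nat.lt_succ_of_le (Nat.sub_le _ _)⟩ =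
                y' ⟨M - jstar h, Nat.lt_succ_of_le (Nat.sub_le _ _)⟩ then (1 : ℝ) else 0)) *
          ((∑ k : Fin d,
              (if y ⟨M, Nat.lt_succ_self M⟩ = k ∧ y' ⟨M, Nat.lt_succ_self M⟩ = k
                then (1 : ℝ) else 0) / tokenMarg d M μb k) - 1));
    |A - Pi * B| ≤ (1 - Pi) * Imax := by
  classical
  intro Pi Imax A B
  set s := Finset.Icc 1 M ×ˢ Finset.Icc 1 M
  -- `P h = (j, i)`: the offset `j` weighted by `σ̃^{(h)}` in `Z`, the offset `i` by `σ^{(h)}` in `X`.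
  set W : (ι → ℕ × ℕ) → ℝ := fun P => ∏ h, σt h (P h).1 * σ h (P h).2
  have hA : A = ∑ P ∈ Fintype.piFinset fun _ : ι => s,
      W P * lagScore d M μb (fun h => (P h).2) (fun h => (P h).1) := by
    simp only [A, sum_mul_sum_ite_eq]
    exact sum_sum_mul_prod_sum μb _ s (fun h q => σt h q.1 * σ h q.2)
      (fun h q y y' => if lag y q.2 = lag y' q.1 then 1 else 0)
  have hB : B = lagScore d M μb istar jstar := rfl
  have hWPi : W (fun h => (jstar h, istar h)) = Pi :=
    Finset.prod_congr rfl fun _ _ => mul_comm _ _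
  have hWnn : ∀ P ∈ Fintype.piFinset fun _ : ι => s, 0 ≤ W P := fun P _ =>
    Finset.prod_nonneg fun h _ => mul_nonneg ((hσt h).1 _) ((hσ h).1 _)
  have hPstar : (fun h => (jstar h, istar h)) ∈ Fintype.piFinset fun _ : ι => s :=
    Fintype.mem_piFinset.mpr fun h =>
      Finset.mem_product.mpr ⟨Finset.mem_Icc.mpr (hj h), Finset.mem_Icc.mpr (hi h)⟩
  rw [hA, hB, ← hWPi]
  refine abs_sum_mul_sub_le_s15 hPstar hWnn
    (sum_piFinset_prod_mul_eq_one (fun h => (hσt h).2) fun h => (hσ h).2) fun P hP => ?_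
  have hPs : ∀ h, P h ∈ s := Fintype.mem_piFinset.mp hP
  exact abs_lagScore_le_sup' d M μb hsum htm _ _ (fun h => (Finset.mem_product.mp (hPs h)).2)
    (fun h => (Finset.mem_product.mp (hPs h)).1) _
end

section
/- In the multi-head feature setup, additionally fix S* ∈ [H]_{≤D} with S* ⊆ {1,…,min(H,M)}, let a > 0 and ε ∈ (0,1], and for each sequence x_1,…,x_{L+1} define s*_l = ∏_{h∈S*} 1{x_{l−h} = x_{L+1−h}}, σ_l = exp(a·s_l)/Σ_{l′=M+1}^{L} exp(a·s_{l′}), σ*_l = exp(a·s*_l)/Σ_{l′=M+1}^{L} exp(a·s*_{l′}), y(k) = Σ_{l=M+1}^{L} σ_l·1{x_l = e_k} and y*(k) = Σ_{l=M+1}^{L} σ*_l·1{x_l = e_k}. Set Δ₁ = 1 − p_{S*} and Δ₂ = 1 − ∏_{h∈S*} (σ^{(h)}_{−h})². Then for any probability distribution ρ on 𝒳^{L+1}, with f₁ = E_ρ[ Σ_{l=M+1}^{L} σ_l Σ_{k=1}^{d} ( 1{x_{L+1}=x_l=e_k}/(y(k)+ε) − y(k)·1{x_{L+1}=e_k}/(y(k)+ε)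 ) · ∏_{h∈S*} ⟨v_l^{(h)}, v_{L+1}^{(h)}⟩ ] and f₂ = E_ρ[ Σ_{l=M+1}^{L} σ*_l Σ_{k=1}^{d} ( 1{x_{L+1}=x_l=e_k}/(y*(k)+ε) − y*(k)·1{x_{L+1}=e_k}/(y*(k)+ε) ) · ∏_{h∈S*} 1{x_{l−h} = x_{L+1−h}} ], one has |f₁ − f₂| ≤ 12·(1 + a·ε^{−1})·(Δ₁ + Δ₂). -/
/-!
Fix a sequence `x`. Each head similarity `⟨v_l^{(h)}, v_{L+1}^{(h)}⟩` is an inner product of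
two mixtures of one-hot vectors with the same weights `σ^{(h)}`, so it lies in `[0, 1]`, is at
least `(σ^{(h)}_{-h})²` when `x_{l-h} = x_{L+1-h}` and at most `1 - (σ^{(h)}_{-h})²` otherwise.
Hence the product over `S*` is within `Δ₂` of `s*_l`, and `s_l`, a `p`-average of such products,
is within `Δ₁` of that product: `|s_l - s*_l| ≤ Δ₁ + Δ₂ =: Δ`.

Only `k = x_{L+1}` survives the sum over `k`, and the summand
`σ_l (1{x_l = x_{L+1}} - y) / (y + ε)` is the gradient of `log (y + ε)` in the logits of the
softmax `σ`. Scores within `Δ` give softmax weights within `min (2, e^{2aΔ} - 1) ≤ 4aΔ` in `ℓ¹`;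
the gradient is `2/ε`-Lipschitz in the weights for the `ℓ¹` norm and has `ℓ¹` norm at most `2`.
The per-sequence error is therefore at most `8aΔ/ε + 2Δ₂ ≤ 12(1 + a/ε)Δ`, and averaging over `ρ`
keeps this bound.
-/

open Finset

section StdSimplex

variable {K : Type*} [Fintype K] {v q : K → ℝ}

theorem sum_mul_mem_Icc_of_mem_stdSimplex (hv : v ∈ stdSimplex ℝ K) (hq : q ∈ stdSimplex ℝ K) :
    0 ≤ ∑ k, v k * q k ∧ ∑ k, v k * q k ≤ 1 := by
  refine ⟨sum_nonneg fun k _ => mul_nonneg (hv.1 k) (hq.1 k), hv.2 ▸ sum_le_sum fun k _ => ?_⟩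
  exact mul_le_of_le_one_right (hv.1 k) (mem_Icc_of_mem_stdSimplex hq k).2

theorem sq_le_sum_mul_of_le (hv : v ∈ stdSimplex ℝ K) (hq : q ∈ stdSimplex ℝ K) {r : ℝ}
    (hr : 0 ≤ r) {k : K} (hvk : r ≤ v k) (hqk : r ≤ q k) : r ^ 2 ≤ ∑ k, v k * q k :=
  (sq r ▸ mul_le_mul hvk hqk hr (hv.1 k)).trans <|
    single_le_sum (f := fun k => v k * q k) (fun k _ => mul_nonneg (hv.1 k) (hq.1 k)) (mem_univ k)

theorem sum_mul_le_one_sub_sq_of_ne [DecidableEq K] (hv : v ∈ stdSimplex ℝ K)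
    (hq : q ∈ stdSimplex ℝ K) {r : ℝ} (hr : 0 ≤ r) {k k' : K} (hkk' : k ≠ k') (hvk : r ≤ v k)
    (hqk' : r ≤ q k') :
    ∑ k, v k * q k ≤ 1 - r ^ 2 := by
  have hqk : q k ≤ 1 - r := by
    have h₁ := single_le_sum (fun j _ => hq.1 j) (mem_erase.mpr ⟨hkk'.symm, mem_univ k'⟩)
    have h₂ := add_sum_erase univ q (mem_univ k)
    linarith [hq.2]
  have hrest : ∑ j ∈ univ.erase k, v j * q j ≤ 1 - v k := by
    rw [← hv.2, ← add_sum_erase _ _ (mem_univ k), add_sub_cancel_left]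
    exact sum_le_sum fun j _ => mul_le_of_le_one_right (hv.1 j) (mem_Icc_of_mem_stdSimplex hq j).2
  rw [← add_sum_erase _ _ (mem_univ k)]
  nlinarith [mul_le_mul_of_nonneg_left hqk (hv.1 k), mul_le_mul_of_nonneg_left hvk hr]

end StdSimplex

theorem abs_prod_sub_prod_ite_le_s16 {ι : Type*} (S : Finset ι) (Q r : ι → ℝ) (b : ι → Prop)
    [DecidablePred b] (hQ : ∀ h ∈ S, 0 ≤ Q h ∧ Q h ≤ 1) (hr : ∀ h ∈ S, 0 ≤ r h ∧ r h ≤ 1)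
    (hlow : ∀ h ∈ S, b h → r h ^ 2 ≤ Q h) (hhigh : ∀ h ∈ S, ¬ b h → Q h ≤ 1 - r h ^ 2) :
    |∏ h ∈ S, Q h - ∏ h ∈ S, (if b h then (1 : ℝ) else 0)| ≤ 1 - ∏ h ∈ S, r h ^ 2 := by
  have hr2 : ∀ h ∈ S, 0 ≤ r h ^ 2 ∧ r h ^ 2 ≤ 1 := fun h hh =>
    ⟨sq_nonneg _, pow_le_one₀ (hr h hh).1 (hr h hh).2⟩
  have hQ0 : 0 ≤ ∏ h ∈ S, Q h := prod_nonneg fun h hh => (hQ h hh).1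
  have hQ1 : ∏ h ∈ S, Q h ≤ 1 := prod_le_one (fun h hh => (hQ h hh).1) fun h hh => (hQ h hh).2
  by_cases hall : ∀ h ∈ S, b h
  · have hone : ∏ h ∈ S, (if b h then (1 : ℝ) else 0) = 1 :=
      prod_eq_one fun h hh => if_pos (hall h hh)
    rw [hone, abs_sub_comm, abs_of_nonneg (sub_nonneg.mpr hQ1)]
    exact sub_le_sub_left (prod_le_prod (fun h hh => (hr2 h hh).1)
      fun h hh => hlow h hh (hall h hh)) 1
  · obtain ⟨h₀, hh₀, hb₀⟩ := not_forall₂.mp hall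
    have hzero : ∏ h ∈ S, (if b h then (1 : ℝ) else 0) = 0 := prod_eq_zero hh₀ (if_neg hb₀)
    rw [hzero, sub_zero, abs_of_nonneg hQ0]
    have prod_le_factor : ∀ f : ι → ℝ, (∀ h ∈ S, 0 ≤ f h ∧ f h ≤ 1) → ∏ h ∈ S, f h ≤ f h₀ :=
      fun f hf => (prod_le_prod_of_subset_of_le_one (singleton_subset_iff.mpr hh₀)
        (fun h hh => (hf h hh).1) fun h hh _ => (hf h hh).2).trans_eq (prod_singleton f h₀)
    linarith [hhigh h₀ hh₀ hb₀, prod_le_factor Q hQ, prod_le_factor _ hr2]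

theorem abs_sum_mul_sub_le_one_sub {ι : Type*} {F : Finset ι} {p g : ι → ℝ} {S₀ : ι}
    (hS₀ : S₀ ∈ F) (hp0 : ∀ S ∈ F, 0 ≤ p S) (hp1 : ∑ S ∈ F, p S = 1)
    (hg : ∀ S ∈ F, 0 ≤ g S ∧ g S ≤ 1) :
    |∑ S ∈ F, p S * g S - g S₀| ≤ 1 - p S₀ := by
  classical
  have hrest : ∑ S ∈ F.erase S₀, p S = 1 - p S₀ := by rw [← hp1, ← add_sum_erase F p hS₀]; ring
  have hlo : 0 ≤ ∑ S ∈ F.erase S₀, p S * g S :=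
    sum_nonneg fun S hS => mul_nonneg (hp0 S (mem_of_mem_erase hS)) (hg S (mem_of_mem_erase hS)).1
  have hhi : ∑ S ∈ F.erase S₀, p S * g S ≤ 1 - p S₀ := hrest ▸ sum_le_sum fun S hS =>
    mul_le_of_le_one_right (hp0 S (mem_of_mem_erase hS)) (hg S (mem_of_mem_erase hS)).2
  rw [← add_sum_erase F _ hS₀, abs_le]
  obtain ⟨hg0, hg1⟩ := hg S₀ hS₀
  constructor <;> nlinarith [hp0 S₀ hS₀]

section OneHotMix

variable {ι K : Type*} [Fintype K] [DecidableEq K] {J : Finset ι} {w : ι → ℝ}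

def oneHotMix (J : Finset ι) (w : ι → ℝ) (t : ι → K) (k : K) : ℝ :=
  ∑ i ∈ J, w i * if t i = k then 1 else 0

def oneHotMixInner (J : Finset ι) (w : ι → ℝ) (t t' : ι → K) : ℝ :=
  ∑ k, oneHotMix J w t k * oneHotMix J w t' k

theorem oneHotMix_mem_stdSimplex (hw0 : ∀ i ∈ J, 0 ≤ w i) (hw1 : ∑ i ∈ J, w i = 1)
    (t : ι → K) : oneHotMix J w t ∈ stdSimplex ℝ K := by
  convert (convex_stdSimplex ℝ K).sum_mem hw0 hw1 fun i _ => ite_eq_mem_stdSimplex ℝ (t i) using 1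
  ext k
  simp [oneHotMix, Finset.sum_apply]

omit [Fintype K] in
theorem le_oneHotMix (hw0 : ∀ i ∈ J, 0 ≤ w i) (t : ι → K) {i₀ : ι} (hi₀ : i₀ ∈ J) :
    w i₀ ≤ oneHotMix J w t (t i₀) := by
  simpa [oneHotMix] using single_le_sum (f := fun i => w i * if t i = t i₀ then (1 : ℝ) else 0)
    (fun i hi => mul_nonneg (hw0 i hi) (by split_ifs <;> norm_num)) hi₀

theorem oneHotMixInner_mem_Icc (hw0 : ∀ i ∈ J, 0 ≤ w i) (hw1 : ∑ i ∈ J, w i = 1)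
    (t t' : ι → K) : 0 ≤ oneHotMixInner J w t t' ∧ oneHotMixInner J w t t' ≤ 1 :=
  sum_mul_mem_Icc_of_mem_stdSimplex (oneHotMix_mem_stdSimplex hw0 hw1 t)
    (oneHotMix_mem_stdSimplex hw0 hw1 t')

theorem sq_le_oneHotMixInner (hw0 : ∀ i ∈ J, 0 ≤ w i) (hw1 : ∑ i ∈ J, w i = 1)
    {t t' : ι → K} {i₀ : ι} (hi₀ : i₀ ∈ J) (heq : t i₀ = t' i₀) :
    w i₀ ^ 2 ≤ oneHotMixInner J w t t' :=
  sq_le_sum_mul_of_le (oneHotMix_mem_stdSimplex hw0 hw1 t) (oneHotMix_mem_stdSimplex hw0 hw1 t')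
    (hw0 i₀ hi₀) (le_oneHotMix hw0 t hi₀) (heq ▸ le_oneHotMix hw0 t' hi₀)

theorem oneHotMixInner_le_one_sub_sq (hw0 : ∀ i ∈ J, 0 ≤ w i) (hw1 : ∑ i ∈ J, w i = 1)
    {t t' : ι → K} {i₀ : ι} (hi₀ : i₀ ∈ J) (hne : t i₀ ≠ t' i₀) :
    oneHotMixInner J w t t' ≤ 1 - w i₀ ^ 2 :=
  sum_mul_le_one_sub_sq_of_ne (oneHotMix_mem_stdSimplex hw0 hw1 t)
    (oneHotMix_mem_stdSimplex hw0 hw1 t') (hw0 i₀ hi₀) hne (le_oneHotMix hw0 t hi₀)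
    (le_oneHotMix hw0 t' hi₀)

variable {S : Finset ι} {σ : ι → ι → ℝ}

theorem prod_oneHotMixInner_mem_Icc (hσ0 : ∀ h ∈ S, ∀ i ∈ J, 0 ≤ σ h i)
    (hσ1 : ∀ h ∈ S, ∑ i ∈ J, σ h i = 1) (t t' : ι → K) :
    0 ≤ ∏ h ∈ S, oneHotMixInner J (σ h) t t' ∧ ∏ h ∈ S, oneHotMixInner J (σ h) t t' ≤ 1 :=
  ⟨prod_nonneg fun h hh => (oneHotMixInner_mem_Icc (hσ0 h hh) (hσ1 h hh) t t').1,
    prod_le_one (fun h hh => (oneHotMixInner_mem_Icc (hσ0 h hh) (hσ1 h hh) t t').1)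
      fun h hh => (oneHotMixInner_mem_Icc (hσ0 h hh) (hσ1 h hh) t t').2⟩

/-- Heads and lags share one index type: head `h` is compared at lag `h`. -/
theorem abs_prod_oneHotMixInner_sub_prod_ite_le (hSJ : S ⊆ J)
    (hσ0 : ∀ h ∈ S, ∀ i ∈ J, 0 ≤ σ h i) (hσ1 : ∀ h ∈ S, ∑ i ∈ J, σ h i = 1) (t t' : ι → K) :
    |∏ h ∈ S, oneHotMixInner J (σ h) t t' - ∏ h ∈ S, (if t h = t' h then (1 : ℝ) else 0)| ≤
      1 - ∏ h ∈ S, σ h h ^ 2 :=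
  abs_prod_sub_prod_ite_le_s16 S _ (fun h => σ h h) _
    (fun h hh => oneHotMixInner_mem_Icc (hσ0 h hh) (hσ1 h hh) t t')
    (fun h hh => ⟨hσ0 h hh h (hSJ hh), hσ1 h hh ▸ single_le_sum (hσ0 h hh) (hSJ hh)⟩)
    (fun h hh => sq_le_oneHotMixInner (hσ0 h hh) (hσ1 h hh) (hSJ hh))
    (fun h hh => oneHotMixInner_le_one_sub_sq (hσ0 h hh) (hσ1 h hh) (hSJ hh))

theorem abs_sum_mul_prod_oneHotMixInner_sub_le {G : Finset ι} {F : Finset (Finset ι)}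
    (hFG : ∀ S ∈ F, S ⊆ G) {p : Finset ι → ℝ} (hp0 : ∀ S ∈ F, 0 ≤ p S)
    (hp1 : ∑ S ∈ F, p S = 1) {S₀ : Finset ι} (hS₀ : S₀ ∈ F) (hS₀J : S₀ ⊆ J)
    (hσ0 : ∀ h ∈ G, ∀ i ∈ J, 0 ≤ σ h i) (hσ1 : ∀ h ∈ G, ∑ i ∈ J, σ h i = 1) (t t' : ι → K) :
    |∑ S ∈ F, p S * ∏ h ∈ S, oneHotMixInner J (σ h) t t' -
        ∏ h ∈ S₀, (if t h = t' h then (1 : ℝ) else 0)| ≤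
      (1 - p S₀) + (1 - ∏ h ∈ S₀, σ h h ^ 2) :=
  (abs_sub_le _ (∏ h ∈ S₀, oneHotMixInner J (σ h) t t') _).trans <| add_le_add
    (abs_sum_mul_sub_le_one_sub hS₀ hp0 hp1 fun S hS => prod_oneHotMixInner_mem_Icc
      (fun h hh => hσ0 h (hFG S hS hh)) (fun h hh => hσ1 h (hFG S hS hh)) t t')
    (abs_prod_oneHotMixInner_sub_prod_ite_le hS₀J (fun h hh => hσ0 h (hFG S₀ hS₀ hh))
      (fun h hh => hσ1 h (hFG S₀ hS₀ hh)) t t')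

end OneHotMix

section Softmax

variable {ι : Type*} {I : Finset ι} {u u' : ι → ℝ} {t : ℝ}

noncomputable def softmax (I : Finset ι) (u : ι → ℝ) (l : ι) : ℝ :=
  Real.exp (u l) / ∑ j ∈ I, Real.exp (u j)

theorem softmax_nonneg (I : Finset ι) (u : ι → ℝ) (l : ι) : 0 ≤ softmax I u l := by
  unfold softmax; positivity

theorem sum_softmax (hI : I.Nonempty) (u : ι → ℝ) : ∑ l ∈ I, softmax I u l = 1 := by
  simp only [softmax]
  rw [← sum_div, div_self (sum_pos (fun j _ => Real.exp_pos _) hI).ne']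

theorem softmax_le_exp_mul_softmax (ht : ∀ l ∈ I, |u l - u' l| ≤ t) {l : ι} (hl : l ∈ I) :
    softmax I u l ≤ Real.exp (2 * t) * softmax I u' l := by
  have hZ' : 0 < ∑ j ∈ I, Real.exp (u' j) := sum_pos (fun j _ => Real.exp_pos _) ⟨l, hl⟩
  have hnum : Real.exp (u l) ≤ Real.exp t * Real.exp (u' l) := by
    rw [← Real.exp_add]; exact Real.exp_le_exp.mpr (by linarith [(abs_le.mp (ht l hl)).2])
  have hden : Real.exp (-t) * ∑ j ∈ I, Real.exp (u' j) ≤ ∑ j ∈ I, Real.exp (u j) := by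
    rw [mul_sum]
    refine sum_le_sum fun j hj => ?_
    rw [← Real.exp_add]; exact Real.exp_le_exp.mpr (by linarith [(abs_le.mp (ht j hj)).1])
  calc softmax I u l ≤ Real.exp t * Real.exp (u' l) / (Real.exp (-t) * ∑ j ∈ I, Real.exp (u' j)) :=
        div_le_div₀ (by positivity) hnum (by positivity) hden
    _ = Real.exp (2 * t) * softmax I u' l := by
        rw [softmax, two_mul, Real.exp_add, Real.exp_neg]; field_simp

theorem abs_sub_le_of_le_mul_of_le_mul {a b E : ℝ} (hE : 1 ≤ E)
    (hab : a ≤ E * b) (hba : b ≤ E * a) : |a - b| ≤ (E - 1) * b := by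
  rw [abs_le]; constructor <;> nlinarith

theorem sum_abs_softmax_sub_le_exp (hI : I.Nonempty) (ht : ∀ l ∈ I, |u l - u' l| ≤ t) :
    ∑ l ∈ I, |softmax I u l - softmax I u' l| ≤ Real.exp (2 * t) - 1 := by
  have ht0 : 0 ≤ t := (abs_nonneg _).trans (ht _ hI.choose_spec)
  have ht' : ∀ l ∈ I, |u' l - u l| ≤ t := fun l hl => abs_sub_comm (u l) _ ▸ ht l hl
  calc ∑ l ∈ I, |softmax I u l - softmax I u' l|
      ≤ ∑ l ∈ I, (Real.exp (2 * t) - 1) * softmax I u' l :=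
        sum_le_sum fun l hl => abs_sub_le_of_le_mul_of_le_mul (Real.one_le_exp (by linarith))
          (softmax_le_exp_mul_softmax ht hl) (softmax_le_exp_mul_softmax ht' hl)
    _ = Real.exp (2 * t) - 1 := by rw [← mul_sum, sum_softmax hI, mul_one]

theorem sum_abs_softmax_sub_le (hI : I.Nonempty) (ht : ∀ l ∈ I, |u l - u' l| ≤ t) :
    ∑ l ∈ I, |softmax I u l - softmax I u' l| ≤ 4 * t := by
  have ht0 : 0 ≤ t := (abs_nonneg _).trans (ht _ hI.choose_spec)
  rcases le_or_gt (2 * t) 1 with hsmall | hlarge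
  · have hexp := Real.abs_exp_sub_one_le (x := 2 * t) (by rwa [abs_of_nonneg (by linarith)])
    rw [abs_of_nonneg (show (0 : ℝ) ≤ 2 * t by linarith)] at hexp
    linarith [le_abs_self (Real.exp (2 * t) - 1), sum_abs_softmax_sub_le_exp hI ht]
  · calc ∑ l ∈ I, |softmax I u l - softmax I u' l|
        ≤ ∑ l ∈ I, (softmax I u l + softmax I u' l) := sum_le_sum fun l _ =>
          (abs_sub _ _).trans_eq (by rw [abs_of_nonneg (softmax_nonneg _ _ _),
            abs_of_nonneg (softmax_nonneg _ _ _)])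
      _ ≤ 4 * t := by rw [sum_add_distrib, sum_softmax hI, sum_softmax hI]; linarith

end Softmax

section LogitGrad

variable {ι : Type*} {I : Finset ι}

theorem abs_sum_mul_sub_sum_mul_le_s16 (a b P P' : ι → ℝ) {Δ : ℝ} (hP : ∀ l ∈ I, |P l| ≤ 1)
    (hPP' : ∀ l ∈ I, |P l - P' l| ≤ Δ) :
    |∑ l ∈ I, a l * P l - ∑ l ∈ I, b l * P' l| ≤
      ∑ l ∈ I, |a l - b l| + (∑ l ∈ I, |b l|) * Δ := by
  rw [← sum_sub_distrib, sum_mul, ← sum_add_distrib]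
  refine (abs_sum_le_sum_abs _ _).trans (sum_le_sum fun l hl => ?_)
  calc |a l * P l - b l * P' l| = |(a l - b l) * P l + b l * (P l - P' l)| := by ring_nf
    _ ≤ |a l - b l| * |P l| + |b l| * |P l - P' l| := by
        rw [← abs_mul, ← abs_mul]; exact abs_add_le _ _
    _ ≤ |a l - b l| + |b l| * Δ := by
        gcongr
        · exact mul_le_of_le_one_right (abs_nonneg _) (hP l hl)
        · exact hPP' l hl

theorem abs_sum_sub_mul_le (w w' f : ι → ℝ) {B : ℝ} (hf : ∀ l ∈ I, |f l| ≤ B) :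
    |∑ l ∈ I, w l * f l - ∑ l ∈ I, w' l * f l| ≤ (∑ l ∈ I, |w l - w' l|) * B := by
  rw [← sum_sub_distrib, sum_mul]
  refine (abs_sum_le_sum_abs _ _).trans (sum_le_sum fun l hl => ?_)
  rw [← sub_mul, abs_mul]
  exact mul_le_mul_of_nonneg_left (hf l hl) (abs_nonneg _)

/-- The derivative of `log (∑ j, w j * c j + ε)` with respect to the logit of `l` when
`w` is a softmax. -/
noncomputable def logitGrad (I : Finset ι) (ε : ℝ) (w c : ι → ℝ) (l : ι) : ℝ :=
  w l * ((c l - ∑ j ∈ I, w j * c j) / (∑ j ∈ I, w j * c j + ε))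

variable {ε : ℝ} {w w' c : ι → ℝ}

theorem sum_mul_mem_Icc (hw0 : ∀ l ∈ I, 0 ≤ w l) (hw1 : ∑ l ∈ I, w l = 1)
    (hc : ∀ l ∈ I, 0 ≤ c l ∧ c l ≤ 1) : 0 ≤ ∑ l ∈ I, w l * c l ∧ ∑ l ∈ I, w l * c l ≤ 1 :=
  ⟨sum_nonneg fun l hl => mul_nonneg (hw0 l hl) (hc l hl).1,
    hw1 ▸ sum_le_sum fun l hl => mul_le_of_le_one_right (hw0 l hl) (hc l hl).2⟩

theorem sum_abs_logitGrad_le_two (hε : 0 < ε) (hw0 : ∀ l ∈ I, 0 ≤ w l)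
    (hw1 : ∑ l ∈ I, w l = 1) (hc : ∀ l ∈ I, 0 ≤ c l ∧ c l ≤ 1) :
    ∑ l ∈ I, |logitGrad I ε w c l| ≤ 2 := by
  obtain ⟨hy0, hy1⟩ := sum_mul_mem_Icc hw0 hw1 hc
  set y := ∑ j ∈ I, w j * c j with hy
  have hyε : 0 < y + ε := by linarith
  calc ∑ l ∈ I, |logitGrad I ε w c l| ≤ ∑ l ∈ I, w l * ((c l + y) / (y + ε)) := by
        refine sum_le_sum fun l hl => ?_
        rw [logitGrad, abs_mul, abs_of_nonneg (hw0 l hl), abs_div, abs_of_pos hyε]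
        gcongr
        · exact hw0 l hl
        · exact (abs_sub _ _).trans_eq (by rw [abs_of_nonneg (hc l hl).1, abs_of_nonneg hy0])
    _ = 2 * y / (y + ε) := by
        simp only [mul_div_assoc', ← sum_div, mul_add, sum_add_distrib, ← sum_mul, hw1, ← hy]
        ring
    _ ≤ 2 := by rw [div_le_iff₀ hyε]; linarith

theorem abs_mul_div_sub_mul_div_le {ε y y' c b b' : ℝ} (hε : 0 < ε) (hy0 : 0 ≤ y)
    (hy1 : y ≤ 1) (hy'0 : 0 ≤ y') (hc0 : 0 ≤ c) (hc1 : c ≤ 1) (hb' : 0 ≤ b') :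
    |b * ((c - y) / (y + ε)) - b' * ((c - y') / (y' + ε))| ≤
      |b - b'| / ε + b' * (c + ε) * (|y - y'| / ((y + ε) * (y' + ε))) := by
  have hyε : 0 < y + ε := by linarith
  have hy'ε : 0 < y' + ε := by linarith
  have hsplit : b * ((c - y) / (y + ε)) - b' * ((c - y') / (y' + ε)) =
      (b - b') * ((c - y) / (y + ε)) + b' * (c + ε) * ((y' - y) / ((y + ε) * (y' + ε))) := by
    field_simp; ring
  rw [hsplit]
  refine (abs_add_le _ _).trans (add_le_add ?_ ?_)
  · rw [abs_mul, abs_div, abs_of_pos hyε, mul_div_assoc']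
    calc |b - b'| * |c - y| / (y + ε) ≤ |b - b'| * 1 / ε := by
          gcongr
          · exact abs_le.mpr ⟨by linarith, by linarith⟩
          · linarith
      _ = |b - b'| / ε := by rw [mul_one]
  · rw [abs_mul, abs_of_nonneg (mul_nonneg hb' (by linarith)), abs_div,
      abs_of_pos (mul_pos hyε hy'ε), abs_sub_comm]

theorem sum_abs_logitGrad_sub_le (hε : 0 < ε) (hw0 : ∀ l ∈ I, 0 ≤ w l)
    (hw1 : ∑ l ∈ I, w l = 1) (hw'0 : ∀ l ∈ I, 0 ≤ w' l) (hw'1 : ∑ l ∈ I, w' l = 1)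
    (hc : ∀ l ∈ I, 0 ≤ c l ∧ c l ≤ 1) :
    ∑ l ∈ I, |logitGrad I ε w c l - logitGrad I ε w' c l| ≤
      2 * (∑ l ∈ I, |w l - w' l|) / ε := by
  obtain ⟨hy0, hy1⟩ := sum_mul_mem_Icc hw0 hw1 hc
  obtain ⟨hy'0, -⟩ := sum_mul_mem_Icc hw'0 hw'1 hc
  have hyy' : |∑ l ∈ I, w l * c l - ∑ l ∈ I, w' l * c l| ≤ ∑ l ∈ I, |w l - w' l| := by
    simpa using abs_sum_sub_mul_le w w' c fun l hl => abs_le.mpr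
      ⟨by linarith [(hc l hl).1], (hc l hl).2⟩
  set y := ∑ j ∈ I, w j * c j
  set y' := ∑ j ∈ I, w' j * c j with hy'
  set δ := ∑ l ∈ I, |w l - w' l|
  have hmass : ∑ l ∈ I, w' l * (c l + ε) = y' + ε := by
    rw [hy']; simp only [mul_add, sum_add_distrib, ← sum_mul, hw'1, one_mul]
  calc ∑ l ∈ I, |logitGrad I ε w c l - logitGrad I ε w' c l|
      ≤ ∑ l ∈ I, (|w l - w' l| / ε + w' l * (c l + ε) * (|y - y'| / ((y + ε) * (y' + ε)))) :=
        sum_le_sum fun l hl => abs_mul_div_sub_mul_div_le hε hy0 hy1 hy'0 (hc l hl).1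
          (hc l hl).2 (hw'0 l hl)
    _ = δ / ε + |y - y'| / (y + ε) := by
        rw [sum_add_distrib, ← sum_div, ← sum_mul, hmass]
        change δ / ε + _ = _
        field_simp
    _ ≤ δ / ε + δ / ε := by gcongr; linarith
    _ = 2 * δ / ε := by ring

theorem abs_sum_logitGrad_mul_sub_le (hε : 0 < ε) (hw0 : ∀ l ∈ I, 0 ≤ w l)
    (hw1 : ∑ l ∈ I, w l = 1) (hw'0 : ∀ l ∈ I, 0 ≤ w' l) (hw'1 : ∑ l ∈ I, w' l = 1)
    (hc : ∀ l ∈ I, 0 ≤ c l ∧ c l ≤ 1) {P P' : ι → ℝ} {Δ : ℝ} (hΔ : 0 ≤ Δ)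
    (hP : ∀ l ∈ I, |P l| ≤ 1) (hPP' : ∀ l ∈ I, |P l - P' l| ≤ Δ) :
    |∑ l ∈ I, logitGrad I ε w c l * P l - ∑ l ∈ I, logitGrad I ε w' c l * P' l| ≤
      2 * (∑ l ∈ I, |w l - w' l|) / ε + 2 * Δ :=
  (abs_sum_mul_sub_sum_mul_le_s16 _ _ P P' hP hPP').trans <| add_le_add
    (sum_abs_logitGrad_sub_le hε hw0 hw1 hw'0 hw'1 hc)
    (mul_le_mul_of_nonneg_right (sum_abs_logitGrad_le_two hε hw'0 hw'1 hc) hΔ)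

theorem abs_sum_logitGrad_softmax_sub_le (hI : I.Nonempty)
    {a Δ Δ' : ℝ} (ha : 0 ≤ a) (hε : 0 < ε) (hΔ' : 0 ≤ Δ') {u u' P P' : ι → ℝ}
    (hc : ∀ l ∈ I, 0 ≤ c l ∧ c l ≤ 1) (hP : ∀ l ∈ I, 0 ≤ P l ∧ P l ≤ 1)
    (hPP' : ∀ l ∈ I, |P l - P' l| ≤ Δ') (huu' : ∀ l ∈ I, |u l - u' l| ≤ Δ) :
    |∑ l ∈ I, logitGrad I ε (softmax I fun l => a * u l) c l * P l -
        ∑ l ∈ I, logitGrad I ε (softmax I fun l => a * u' l) c l * P' l| ≤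
      8 * a * Δ / ε + 2 * Δ' := by
  have hδ := sum_abs_softmax_sub_le hI (u := fun l => a * u l) (u' := fun l => a * u' l)
    (t := a * Δ) fun l hl => by
      rw [← mul_sub, abs_mul, abs_of_nonneg ha]; exact mul_le_mul_of_nonneg_left (huu' l hl) ha
  refine (abs_sum_logitGrad_mul_sub_le hε (fun l _ => softmax_nonneg _ _ l) (sum_softmax hI _)
    (fun l _ => softmax_nonneg _ _ l) (sum_softmax hI _) hc hΔ'
    (fun l hl => (abs_of_nonneg (hP l hl).1).trans_le (hP l hl).2) hPP').trans ?_
  have : 2 * (∑ l ∈ I, |softmax I (fun l => a * u l) l - softmax I (fun l => a * u' l) l|) / ε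
      ≤ 8 * a * Δ / ε := by
    rw [div_le_div_iff_of_pos_right hε]; linarith
  linarith

end LogitGrad

theorem sum_ite_div_sub_mul_eq {K : Type*} [Fintype K] [DecidableEq K] (Y : K → ℝ) (k₀ t : K)
    (ε P : ℝ) :
    ∑ k, ((if k₀ = k ∧ t = k then (1 : ℝ) else 0) / (Y k + ε) -
        Y k * (if k₀ = k then (1 : ℝ) else 0) / (Y k + ε)) * P =
      ((if t = k₀ then (1 : ℝ) else 0) - Y k₀) / (Y k₀ + ε) * P := by
  rw [sum_eq_single k₀ (fun k _ hk => by simp [Ne.symm hk]) (fun h => absurd (mem_univ k₀) h)]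
  simp only [true_and, if_true, mul_one, sub_div, eq_comm]

theorem sum_mul_sum_ite_eq_sum_logitGrad {ι K : Type*} [Fintype K] [DecidableEq K]
    (I : Finset ι) (ε : ℝ) (w : ι → ℝ) (tok : ι → K) (k₀ : K) (P : ι → ℝ) :
    ∑ l ∈ I, w l * ∑ k, ((if k₀ = k ∧ tok l = k then (1 : ℝ) else 0) /
          ((∑ j ∈ I, w j * if tok j = k then (1 : ℝ) else 0) + ε) -
        (∑ j ∈ I, w j * if tok j = k then (1 : ℝ) else 0) * (if k₀ = k then (1 : ℝ) else 0) /
          ((∑ j ∈ I, w j * if tok j = k then (1 : ℝ) else 0) + ε)) * P l =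
      ∑ l ∈ I, logitGrad I ε w (fun l => if tok l = k₀ then 1 else 0) l * P l :=
  sum_congr rfl fun l _ => by rw [sum_ite_div_sub_mul_eq, logitGrad, mul_assoc]

theorem abs_sum_mul_sub_sum_mul_le_of_forall {α : Type*} [Fintype α] {ρ A B : α → ℝ} {C : ℝ}
    (hρ0 : ∀ x, 0 ≤ ρ x) (hρ1 : ∑ x, ρ x = 1) (h : ∀ x, |A x - B x| ≤ C) :
    |∑ x, ρ x * A x - ∑ x, ρ x * B x| ≤ C := by
  rw [← sum_sub_distrib]
  calc |∑ x, (ρ x * A x - ρ x * B x)| ≤ ∑ x, ρ x * C :=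
        (abs_sum_le_sum_abs _ _).trans <| sum_le_sum fun x _ => by
          rw [← mul_sub, abs_mul, abs_of_nonneg (hρ0 x)]
          exact mul_le_mul_of_nonneg_left (h x) (hρ0 x)
    _ = C := by rw [← sum_mul, hρ1, one_mul]

theorem statement16_general (d H M D L : ℕ) (hML : M < L)
    (σ : ℕ → ℕ → ℝ) (hσ0 : ∀ h i, 0 ≤ σ h i)
    (hσ1 : ∀ h ∈ Finset.Icc 1 H, ∑ i ∈ Finset.Icc 1 M, σ h i = 1)
    (p : Finset ℕ → ℝ) (hp0 : ∀ S, 0 ≤ p S)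
    (hp1 : ∑ S ∈ (Finset.Icc 1 H).powerset.filter (fun S => S.card ≤ D), p S = 1)
    (Sstar : Finset ℕ)
    (hSstar : Sstar ∈ (Finset.Icc 1 H).powerset.filter (fun S => S.card ≤ D))
    (hSstarM : ∀ h ∈ Sstar, h ≤ M)
    (a ε : ℝ) (ha : 0 < a) (hε0 : 0 < ε)
    (ρ : (Fin (L + 1) → Fin d) → ℝ) (hρ0 : ∀ x, 0 ≤ ρ x) (hρ1 : ∑ x, ρ x = 1) :
    let v : (Fin (L + 1) → Fin d) → ℕ → {m // m ∈ Finset.Ico M L} → Fin d → ℝ := fun x h l kk =>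
      ∑ i ∈ Finset.Icc 1 M, σ h i *
        (if x ⟨l.1 - i, lt_of_le_of_lt (Nat.sub_le _ _) (icoLtSucc l)⟩ = kk then (1 : ℝ) else 0);
    let vq : (Fin (L + 1) → Fin d) → ℕ → Fin d → ℝ := fun x h kk =>
      ∑ i ∈ Finset.Icc 1 M, σ h i *
        (if x ⟨L - i, Nat.lt_succ_of_le (Nat.sub_le _ _)⟩ = kk then (1 : ℝ) else 0);
    let s : (Fin (L + 1) → Fin d) → {m // m ∈ Finset.Ico M L} → ℝ := fun x l =>
      ∑ S ∈ (Finset.Icc 1 H).powerset.filter (fun S => S.card ≤ D),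
        p S * ∏ h ∈ S, ∑ kk : Fin d, v x h l kk * vq x h kk;
    let sstar : (Fin (L + 1) → Fin d) → {m // m ∈ Finset.Ico M L} → ℝ := fun x l =>
      ∏ h ∈ Sstar,
        (if x ⟨l.1 - h, lt_of_le_of_lt (Nat.sub_le _ _) (icoLtSucc l)⟩ =
            x ⟨L - h, Nat.lt_succ_of_le (Nat.sub_le _ _)⟩ then (1 : ℝ) else 0);
    let σw : (Fin (L + 1) → Fin d) → {m // m ∈ Finset.Ico M L} → ℝ := fun x l =>
      Real.exp (a * s x l) / ∑ l' ∈ (Finset.Ico M L).attach, Real.exp (a * s x l');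
    let σws : (Fin (L + 1) → Fin d) → {m // m ∈ Finset.Ico M L} → ℝ := fun x l =>
      Real.exp (a * sstar x l) / ∑ l' ∈ (Finset.Ico M L).attach, Real.exp (a * sstar x l');
    let y : (Fin (L + 1) → Fin d) → Fin d → ℝ := fun x k =>
      ∑ l ∈ (Finset.Ico M L).attach, σw x l * (if x ⟨l.1, icoLtSucc l⟩ = k then (1 : ℝ) else 0);
    let ys : (Fin (L + 1) → Fin d) → Fin d → ℝ := fun x k =>
      ∑ l ∈ (Finset.Ico M L).attach, σws x l * (if x ⟨l.1, icoLtSucc l⟩ = k then (1 : ℝ) else 0);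
    let f1 := ∑ x : Fin (L + 1) → Fin d, ρ x *
      ∑ l ∈ (Finset.Ico M L).attach, σw x l *
        ∑ k : Fin d,
          ((if x ⟨L, Nat.lt_succ_self L⟩ = k ∧ x ⟨l.1, icoLtSucc l⟩ = k then (1 : ℝ) else 0) /
              (y x k + ε) -
            y x k * (if x ⟨L, Nat.lt_succ_self L⟩ = k then (1 : ℝ) else 0) / (y x k + ε)) *
          ∏ h ∈ Sstar, ∑ kk : Fin d, v x h l kk * vq x h kk;
    let f2 := ∑ x : Fin (L + 1) → Fin d, ρ x *
      ∑ l ∈ (Finset.Ico M L).attach, σws x l *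
        ∑ k : Fin d,
          ((if x ⟨L, Nat.lt_succ_self L⟩ = k ∧ x ⟨l.1, icoLtSucc l⟩ = k then (1 : ℝ) else 0) /
              (ys x k + ε) -
            ys x k * (if x ⟨L, Nat.lt_succ_self L⟩ = k then (1 : ℝ) else 0) / (ys x k + ε)) *
          sstar x l;
    |f1 - f2| ≤ 12 * (1 + a * ε⁻¹) * ((1 - p Sstar) + (1 - ∏ h ∈ Sstar, σ h h ^ 2)) := by
  intro v vq s sstar σw σws y ys f1 f2
  have hFH : ∀ S ∈ (Icc 1 H).powerset.filter (fun S => S.card ≤ D), S ⊆ Icc 1 H :=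
    fun S hS => mem_powerset.mp (mem_filter.mp hS).1
  have hSM : Sstar ⊆ Icc 1 M := fun h hh =>
    mem_Icc.mpr ⟨(mem_Icc.mp (hFH _ hSstar hh)).1, hSstarM h hh⟩
  have hσ0' : ∀ h ∈ Sstar, ∀ i ∈ Icc 1 M, 0 ≤ σ h i := fun h _ i _ => hσ0 h i
  have hσ1' : ∀ h ∈ Sstar, ∑ i ∈ Icc 1 M, σ h i = 1 := fun h hh => hσ1 h (hFH _ hSstar hh)
  have hΔ₁ : 0 ≤ 1 - p Sstar := sub_nonneg.mpr (hp1 ▸ single_le_sum (fun S _ => hp0 S) hSstar)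
  have hΔ₂ : 0 ≤ 1 - ∏ h ∈ Sstar, σ h h ^ 2 :=
    sub_nonneg.mpr <| prod_le_one (fun _ _ => sq_nonneg _) fun h hh =>
      pow_le_one₀ (hσ0 h h) (hσ1' h hh ▸ single_le_sum (hσ0' h hh) (hSM hh))
  have hI : (Ico M L).attach.Nonempty := attach_nonempty_iff.mpr (nonempty_Ico.mpr hML)
  refine abs_sum_mul_sub_sum_mul_le_of_forall hρ0 hρ1 fun x => ?_
  have key := abs_sum_logitGrad_softmax_sub_le hI ha.le hε0 hΔ₂ (u := s x) (u' := sstar x)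
    (c := fun l => if x ⟨l.1, icoLtSucc l⟩ = x ⟨L, Nat.lt_succ_self L⟩ then 1 else 0)
    (fun l _ => by split_ifs <;> norm_num)
    (P := fun l => ∏ h ∈ Sstar, ∑ kk, v x h l kk * vq x h kk)
    (fun l _ => prod_oneHotMixInner_mem_Icc hσ0' hσ1' _ _)
    (fun l _ => abs_prod_oneHotMixInner_sub_prod_ite_le hSM hσ0' hσ1' _ _)
    (fun l _ => abs_sum_mul_prod_oneHotMixInner_sub_le hFH (fun S _ => hp0 S) hp1 hSstar hSM
      (fun h _ i _ => hσ0 h i) hσ1 _ _)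
  rw [← sum_mul_sum_ite_eq_sum_logitGrad, ← sum_mul_sum_ite_eq_sum_logitGrad] at key
  refine key.trans ?_
  rw [div_eq_mul_inv]
  nlinarith [mul_nonneg (mul_nonneg ha.le (inv_nonneg.mpr hε0.le)) (add_nonneg hΔ₁ hΔ₂)]

/-- Replacing the learned attention scores `s_l` (and the induced softmax
weights `σ_l` and token frequencies `y`) by their idealized counterparts `s*_l`, `σ*_l`, `y*`
incurs an error of at most `12(1 + a ε⁻¹)(Δ₁ + Δ₂)` in the gradient-type expectation, where
`Δ₁ = 1 − p_{S*}` and `Δ₂ = 1 − ∏_{h∈S*}(σ^{(h)}_{−h})²`. -/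
theorem statement16 (d H M D L : ℕ) (hd : 0 < d) (hH : 0 < H) (hM : 0 < M) (hD : 0 < D)
    (hML : M < L)
    (σ : ℕ → ℕ → ℝ) (hσ0 : ∀ h i, 0 ≤ σ h i)
    (hσ1 : ∀ h ∈ Finset.Icc 1 H, ∑ i ∈ Finset.Icc 1 M, σ h i = 1)
    (p : Finset ℕ → ℝ) (hp0 : ∀ S, 0 ≤ p S)
    (hp1 : ∑ S ∈ (Finset.Icc 1 H).powerset.filter (fun S => S.card ≤ D), p S = 1)
    (Sstar : Finset ℕ)
    (hSstar : Sstar ∈ (Finset.Icc 1 H).powerset.filter (fun S => S.card ≤ D))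
    (hSstarM : ∀ h ∈ Sstar, h ≤ M)
    (a ε : ℝ) (ha : 0 < a) (hε0 : 0 < ε) (hε1 : ε ≤ 1)
    (ρ : (Fin (L + 1) → Fin d) → ℝ) (hρ0 : ∀ x, 0 ≤ ρ x) (hρ1 : ∑ x, ρ x = 1) :
    let v : (Fin (L + 1) → Fin d) → ℕ → {m // m ∈ Finset.Ico M L} → Fin d → ℝ := fun x h l kk =>
      ∑ i ∈ Finset.Icc 1 M, σ h i *
        (if x ⟨l.1 - i, lt_of_le_of_lt (Nat.sub_le _ _) (icoLtSucc l)⟩ = kk then (1 : ℝ) else 0);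
    let vq : (Fin (L + 1) → Fin d) → ℕ → Fin d → ℝ := fun x h kk =>
      ∑ i ∈ Finset.Icc 1 M, σ h i *
        (if x ⟨L - i, Nat.lt_succ_of_le (Nat.sub_le _ _)⟩ = kk then (1 : ℝ) else 0);
    let s : (Fin (L + 1) → Fin d) → {m // m ∈ Finset.Ico M L} → ℝ := fun x l =>
      ∑ S ∈ (Finset.Icc 1 H).powerset.filter (fun S => S.card ≤ D),
        p S * ∏ h ∈ S, ∑ kk : Fin d, v x h l kk * vq x h kk;
    let sstar : (Fin (L + 1) → Fin d) → {m // m ∈ Finset.Ico M L} → ℝ := fun x l =>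
      ∏ h ∈ Sstar,
        (if x ⟨l.1 - h, lt_of_le_of_lt (Nat.sub_le _ _) (icoLtSucc l)⟩ =
            x ⟨L - h, Nat.lt_succ_of_le (Nat.sub_le _ _)⟩ then (1 : ℝ) else 0);
    let σw : (Fin (L + 1) → Fin d) → {m // m ∈ Finset.Ico M L} → ℝ := fun x l =>
      Real.exp (a * s x l) / ∑ l' ∈ (Finset.Ico M L).attach, Real.exp (a * s x l');
    let σws : (Fin (L + 1) → Fin d) → {m // m ∈ Finset.Ico M L} → ℝ := fun x l =>
      Real.exp (a * sstar x l) / ∑ l' ∈ (Finset.Ico M L).attach, Real.exp (a * sstar x l');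
    let y : (Fin (L + 1) → Fin d) → Fin d → ℝ := fun x k =>
      ∑ l ∈ (Finset.Ico M L).attach, σw x l * (if x ⟨l.1, icoLtSucc l⟩ = k then (1 : ℝ) else 0);
    let ys : (Fin (L + 1) → Fin d) → Fin d → ℝ := fun x k =>
      ∑ l ∈ (Finset.Ico M L).attach, σws x l * (if x ⟨l.1, icoLtSucc l⟩ = k then (1 : ℝ) else 0);
    let f1 := ∑ x : Fin (L + 1) → Fin d, ρ x *
      ∑ l ∈ (Finset.Ico M L).attach, σw x l *
        ∑ k : Fin d,
          ((if x ⟨L, Nat.lt_succ_self L⟩ = k ∧ x ⟨l.1, icoLtSucc l⟩ = k then (1 : ℝ) else 0) /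
              (y x k + ε) -
            y x k * (if x ⟨L, Nat.lt_succ_self L⟩ = k then (1 : ℝ) else 0) / (y x k + ε)) *
          ∏ h ∈ Sstar, ∑ kk : Fin d, v x h l kk * vq x h kk;
    let f2 := ∑ x : Fin (L + 1) → Fin d, ρ x *
      ∑ l ∈ (Finset.Ico M L).attach, σws x l *
        ∑ k : Fin d,
          ((if x ⟨L, Nat.lt_succ_self L⟩ = k ∧ x ⟨l.1, icoLtSucc l⟩ = k then (1 : ℝ) else 0) /
              (ys x k + ε) -
            ys x k * (if x ⟨L, Nat.lt_succ_self L⟩ = k then (1 : ℝ) else 0) / (ys x k + ε)) *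
          sstar x l;
    |f1 - f2| ≤ 12 * (1 + a * ε⁻¹) * ((1 - p Sstar) + (1 - ∏ h ∈ Sstar, σ h h ^ 2)) :=
  statement16_general d H M D L hML σ hσ0 hσ1 p hp0 hp1 Sstar hSstar hSstarM a ε ha hε0 ρ hρ0 hρ1
end

section
/- Let 𝒳 be a finite vocabulary with |𝒳| = d ≥ 2 and let μ be a probability distribution on 𝒳^{M+1} written as (z, Z) with Z = (z_{−M},…,z_{−1}). Fix a parent set pa ⊆ {1,…,M} with |pa| = n, and assume: (i) the n-gram property: whenever μ(Z = ζ) > 0, the conditional distribution of z given Z = ζ depends only on ζ_{−pa} = (ζ_{−s})_{s∈pa}, i.e. μ(z = e | Z = ζ) = μ(z = e | Z_{−pa} = ζ_{−pa}) for all e ∈ 𝒳; and (ii) uniform marginals: μ(z = e) = 1/d for all e ∈ 𝒳, and for every S ⊆ {1,…,M} and every E ∈ 𝒳^S, μ(Z_{−S} = E) = d^{−|S|}. Then for every S ⊆ {1,…,M} with |S| > n, Ĩ_{χ²}(S) ≤ Ĩ_{χ²}(pa); if moreover Ĩ_{χ²}(pa) > 0, this inequality is strict, and consequently, for every D ≥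 1, every maximizer of Ĩ_{χ²} over { S ⊆ {1,…,M} : |S| ≤ D } has cardinality at most n. -/
open Finset

/-!
By the `n`-gram property, `μ(Z = ζ, z = e) = μ(Z = ζ) · dⁿ μ(z = e, Z_{-pa} = ζ_{-pa})`. Hence
`μ(z = e, Z_{-S} = E)` is a `μ(Z)`-weighted sum over the contexts `ζ` with `ζ_{-S} = E`, and
Cauchy–Schwarz on each such fibre (of mass `d^{-|S|}`) gives
`Ĩ_{χ²}(S) ≤ d^{-(|S| - n)} Ĩ_{χ²}(pa)`. Since `Ĩ_{χ²} ≥ 0` and `d ≥ 2`, the claims follow.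
-/

theorem Finset.sum_sq_sum_fiber_le {Ω α β : Type*} [Fintype Ω] [Fintype α] [Fintype β]
    [DecidableEq α] [DecidableEq β] (q : Ω → ℝ) (hq : ∀ ω, 0 ≤ q ω) (f : Ω → α) (g : Ω → β)
    (h : β → ℝ) {c c' : ℝ} (hf : ∀ a, ∑ ω with f ω = a, q ω = c)
    (hg : ∀ b, ∑ ω with g ω = b, q ω = c') :
    ∑ a, (∑ ω with f ω = a, q ω * h (g ω)) ^ 2 ≤ c * c' * ∑ b, h b ^ 2 :=
  calc ∑ a, (∑ ω with f ω = a, q ω * h (g ω)) ^ 2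
      ≤ ∑ a, c * ∑ ω with f ω = a, q ω * h (g ω) ^ 2 := by
        gcongr with a
        rw [← hf a]
        exact sum_sq_le_sum_mul_sum_of_sq_le_mul _ (fun ω _ => hq ω)
          (fun ω _ => mul_nonneg (hq ω) (sq_nonneg _)) (fun ω _ => le_of_eq (by ring))
    _ = c * ∑ b, ∑ ω with g ω = b, q ω * h b ^ 2 := by
        rw [← mul_sum, sum_fiberwise, ← sum_fiberwise _ g]
        refine congrArg _ (sum_congr rfl fun b _ => sum_congr rfl fun ω hω => ?_)
        rw [(mem_filter.mp hω).2]
    _ = c * c' * ∑ b, h b ^ 2 := by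
        simp only [← sum_mul, hg, mul_sum, mul_assoc]

/-- The tokens of a context `ζ = (z_{-M}, …, z_{-1})` at the lags in `S`, i.e. `ζ_{-S}`. -/
def atLags (d M : ℕ) (S : Finset ℕ) (hS : S ⊆ Icc 1 M) (ζ : Fin M → Fin d) :
    {s // s ∈ S} → Fin d :=
  fun s => ζ ⟨M - s.1, by have := mem_Icc.mp (hS s.2); omega⟩

noncomputable def contextLaw (d M : ℕ) (μb : (Fin (M + 1) → Fin d) → ℝ) (ζ : Fin M → Fin d) :
    ℝ :=
  ∑ e, μb (Fin.snoc ζ e)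

section WindowLaw

variable {d M : ℕ} {S : Finset ℕ} (hS : S ⊆ Icc 1 M) (μb : (Fin (M + 1) → Fin d) → ℝ)
include hS

theorem window_snoc (ζ : Fin M → Fin d) (e : Fin d) :
    window d (M + 1) S (Fin.snoc ζ e) M (Nat.lt_succ_self M) = (e, atLags d M S hS ζ) := by
  refine Prod.ext (Fin.snoc_last (α := fun _ => Fin d) ..) (funext fun s => ?_)
  have hs : M - s.1 < M := by have := mem_Icc.mp (hS s.2); omega
  exact Fin.snoc_castSucc (α := fun _ => Fin d) (i := ⟨M - s.1, hs⟩) ..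

theorem windowLaw_last_eq_sum (e : Fin d) (E : {s // s ∈ S} → Fin d) :
    windowLaw d (M + 1) S μb M (Nat.lt_succ_self M) (e, E) =
      ∑ ζ with atLags d M S hS ζ = E, μb (Fin.snoc ζ e) := by
  rw [windowLaw, ← (Fin.snocEquiv fun _ => Fin d).sum_comp, Fintype.sum_prod_type, sum_comm,
    sum_filter]
  refine sum_congr rfl fun ζ _ => ?_
  change ∑ a, (if window d (M + 1) S (Fin.snoc ζ a) M _ = (e, E) then μb (Fin.snoc ζ a) else 0) = _
  simp only [window_snoc hS, Prod.mk.injEq, ite_and, sum_ite_eq', mem_univ, if_true]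

theorem sum_windowLaw_last (E : {s // s ∈ S} → Fin d) :
    ∑ e, windowLaw d (M + 1) S μb M (Nat.lt_succ_self M) (e, E) =
      ∑ ζ with atLags d M S hS ζ = E, contextLaw d M μb ζ := by
  simp only [windowLaw_last_eq_sum hS, contextLaw]
  exact sum_comm

end WindowLaw

theorem modMI_nonneg {d M : ℕ} (μb : (Fin (M + 1) → Fin d) → ℝ)
    (huniftok : ∀ e, tokenMarg d M μb e = 1 / d) (S : Finset ℕ) : 0 ≤ modMI d M μb S := by
  refine sum_nonneg fun E _ => sub_nonneg.mpr ?_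
  simpa [huniftok, div_div_eq_mul_div, ← mul_sum, mul_comm] using
    sq_sum_le_card_mul_sum_sq (s := univ)
      (f := fun e => windowLaw d (M + 1) S μb M (Nat.lt_succ_self M) (e, E))

theorem one_div_pow_mul_pow {x : ℝ} (hx : x ≠ 0) (k : ℕ) : (1 / x) ^ k * x ^ k = 1 := by
  rw [← mul_pow, one_div_mul_cancel hx, one_pow]

section Uniform

variable {d M : ℕ} (hd : 0 < d) (μb : (Fin (M + 1) → Fin d) → ℝ)
  (hunifset : ∀ S : Finset ℕ, S ⊆ Icc 1 M → ∀ E : {s // s ∈ S} → Fin d,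
    ∑ e, windowLaw d (M + 1) S μb M (Nat.lt_succ_self M) (e, E) = (1 / (d : ℝ)) ^ S.card)
include hd hunifset

theorem modMI_eq_of_uniform (huniftok : ∀ e, tokenMarg d M μb e = 1 / d) {S : Finset ℕ}
    (hS : S ⊆ Icc 1 M) :
    modMI d M μb S =
      d * ∑ e, ∑ E : {s // s ∈ S} → Fin d,
          windowLaw d (M + 1) S μb M (Nat.lt_succ_self M) (e, E) ^ 2
        - (1 / (d : ℝ)) ^ S.card := by
  simp only [modMI, sum_sub_distrib, huniftok, hunifset S hS, div_div_eq_mul_div, div_one,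
    sum_const, card_univ, Fintype.card_fun, Fintype.card_coe, Fintype.card_fin, nsmul_eq_mul]
  rw [sum_comm, mul_sum]
  congr 1
  · simp only [mul_sum, mul_comm]
  · push_cast
    rw [sq, ← mul_assoc, mul_comm ((d : ℝ) ^ S.card),
      one_div_pow_mul_pow (by positivity : (d : ℝ) ≠ 0), one_mul]

theorem apply_snoc_eq_contextLaw_mul (hnn : ∀ y, 0 ≤ μb y) {pa : Finset ℕ} (hpa : pa ⊆ Icc 1 M)
    (hngram : ∀ (ζ : Fin M → Fin d) (e : Fin d), 0 < contextLaw d M μb ζ →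
      μb (Fin.snoc ζ e) / contextLaw d M μb ζ =
        windowLaw d (M + 1) pa μb M (Nat.lt_succ_self M) (e, atLags d M pa hpa ζ) /
          ∑ e', windowLaw d (M + 1) pa μb M (Nat.lt_succ_self M) (e', atLags d M pa hpa ζ))
    (ζ : Fin M → Fin d) (e : Fin d) :
    μb (Fin.snoc ζ e) = contextLaw d M μb ζ *
      ((d : ℝ) ^ pa.card *
        windowLaw d (M + 1) pa μb M (Nat.lt_succ_self M) (e, atLags d M pa hpa ζ)) := by
  have hq : 0 ≤ contextLaw d M μb ζ := sum_nonneg fun e' _ => hnn (Fin.snoc ζ e')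
  obtain hpos | hzero := hq.lt_or_eq
  · have h := hngram ζ e hpos
    rw [hunifset pa hpa, div_eq_div_iff hpos.ne' (by positivity)] at h
    linear_combination (d : ℝ) ^ pa.card * h - μb (Fin.snoc ζ e) *
      one_div_pow_mul_pow (by positivity : (d : ℝ) ≠ 0) pa.card
  · have hzero' := (sum_eq_zero_iff_of_nonneg fun e' _ => hnn (Fin.snoc ζ e')).mp hzero.symm
    rw [hzero' e (mem_univ e), ← hzero, zero_mul]

variable (hnn : ∀ y, 0 ≤ μb y) {pa : Finset ℕ} (hpa : pa ⊆ Icc 1 M)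
  (hfac : ∀ (ζ : Fin M → Fin d) (e : Fin d), μb (Fin.snoc ζ e) = contextLaw d M μb ζ *
    ((d : ℝ) ^ pa.card *
      windowLaw d (M + 1) pa μb M (Nat.lt_succ_self M) (e, atLags d M pa hpa ζ)))
include hnn hfac

theorem sum_sq_windowLaw_le {S : Finset ℕ} (hS : S ⊆ Icc 1 M) (e : Fin d) :
    ∑ E : {s // s ∈ S} → Fin d, windowLaw d (M + 1) S μb M (Nat.lt_succ_self M) (e, E) ^ 2 ≤
      (1 / (d : ℝ)) ^ S.card * (d : ℝ) ^ pa.card *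
        ∑ A : {s // s ∈ pa} → Fin d,
          windowLaw d (M + 1) pa μb M (Nat.lt_succ_self M) (e, A) ^ 2 := by
  have hfibre := sum_sq_sum_fiber_le (contextLaw d M μb)
    (fun ζ => sum_nonneg fun e' _ => hnn (Fin.snoc ζ e')) (atLags d M S hS) (atLags d M pa hpa)
    (fun A => (d : ℝ) ^ pa.card * windowLaw d (M + 1) pa μb M (Nat.lt_succ_self M) (e, A))
    (fun E => by rw [← sum_windowLaw_last hS, hunifset S hS])
    (fun A => by rw [← sum_windowLaw_last hpa, hunifset pa hpa])
  have hone := one_div_pow_mul_pow (by positivity : (d : ℝ) ≠ 0) pa.card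
  calc ∑ E, windowLaw d (M + 1) S μb M (Nat.lt_succ_self M) (e, E) ^ 2
      = ∑ E, (∑ ζ with atLags d M S hS ζ = E, contextLaw d M μb ζ * ((d : ℝ) ^ pa.card *
          windowLaw d (M + 1) pa μb M (Nat.lt_succ_self M) (e, atLags d M pa hpa ζ))) ^ 2 := by
        simp only [windowLaw_last_eq_sum hS, ← hfac]
    _ ≤ (1 / (d : ℝ)) ^ S.card * (1 / (d : ℝ)) ^ pa.card * ∑ A, ((d : ℝ) ^ pa.card *
          windowLaw d (M + 1) pa μb M (Nat.lt_succ_self M) (e, A)) ^ 2 := hfibre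
    _ = _ := by
      rw [mul_sum, mul_sum]
      refine sum_congr rfl fun A _ => ?_
      linear_combination (1 / (d : ℝ)) ^ S.card * (d : ℝ) ^ pa.card *
        windowLaw d (M + 1) pa μb M (Nat.lt_succ_self M) (e, A) ^ 2 * hone

theorem modMI_le_pow_mul_modMI (huniftok : ∀ e, tokenMarg d M μb e = 1 / d) {S : Finset ℕ}
    (hS : S ⊆ Icc 1 M) (hcard : pa.card ≤ S.card) :
    modMI d M μb S ≤ (1 / (d : ℝ)) ^ (S.card - pa.card) * modMI d M μb pa := by
  have hsum := sum_le_sum fun e (_ : e ∈ univ) =>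
    sum_sq_windowLaw_le hd μb hunifset hnn hpa hfac hS e
  have hone := one_div_pow_mul_pow (by positivity : (d : ℝ) ≠ 0) pa.card
  have hsplit : (1 / (d : ℝ)) ^ S.card =
      (1 / (d : ℝ)) ^ (S.card - pa.card) * (1 / (d : ℝ)) ^ pa.card := by
    rw [← pow_add, Nat.sub_add_cancel hcard]
  rw [← mul_sum, hsplit] at hsum
  rw [modMI_eq_of_uniform hd μb hunifset huniftok hS,
    modMI_eq_of_uniform hd μb hunifset huniftok hpa, hsplit]
  calc _ ≤ d * ((1 / (d : ℝ)) ^ (S.card - pa.card) * (1 / (d : ℝ)) ^ pa.card * (d : ℝ) ^ pa.card *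
          ∑ e, ∑ A, windowLaw d (M + 1) pa μb M (Nat.lt_succ_self M) (e, A) ^ 2) -
        (1 / (d : ℝ)) ^ (S.card - pa.card) * (1 / (d : ℝ)) ^ pa.card := by
        gcongr
    _ = _ := by
      linear_combination (d : ℝ) * (1 / (d : ℝ)) ^ (S.card - pa.card) *
        (∑ e, ∑ A, windowLaw d (M + 1) pa μb M (Nat.lt_succ_self M) (e, A) ^ 2) * hone

end Uniform

/-- Suppose `μ` satisfies the `n`-gram property with parent set `pa`
(`|pa| = n`) and has uniform marginals. Then any `S ⊆ {1,…,M}` with `|S| > n` satisfies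
`Ĩ_{χ²}(S) ≤ Ĩ_{χ²}(pa)`; if moreover `Ĩ_{χ²}(pa) > 0` the inequality is strict, and
consequently every maximizer of `Ĩ_{χ²}` over `{S : |S| ≤ D}` has cardinality at most `n`. -/
theorem statement19 (d M n : ℕ) (hd : 2 ≤ d)
    (μb : (Fin (M + 1) → Fin d) → ℝ) (hnn : ∀ y, 0 ≤ μb y)
    (pa : Finset ℕ) (hpa : ∀ s ∈ pa, 1 ≤ s ∧ s ≤ M) (hpacard : pa.card = n)
    (hngram : ∀ (ζ : Fin M → Fin d) (e : Fin d),
      0 < (∑ e' : Fin d, μb (Fin.snoc ζ e')) →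
        μb (Fin.snoc ζ e) / (∑ e' : Fin d, μb (Fin.snoc ζ e')) =
          windowLaw d (M + 1) pa μb M (Nat.lt_succ_self M)
              (e, fun s => ζ ⟨M - s.1, by have := hpa s.1 s.2; omega⟩) /
            ∑ e' : Fin d,
              windowLaw d (M + 1) pa μb M (Nat.lt_succ_self M)
                (e', fun s => ζ ⟨M - s.1, by have := hpa s.1 s.2; omega⟩))
    (huniftok : ∀ e : Fin d, tokenMarg d M μb e = 1 / d)
    (hunifset : ∀ S : Finset ℕ, S ⊆ Finset.Icc 1 M →
      ∀ E : {s // s ∈ S} → Fin d,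
        (∑ e : Fin d, windowLaw d (M + 1) S μb M (Nat.lt_succ_self M) (e, E)) =
          (1 / (d : ℝ)) ^ S.card) :
    (∀ S : Finset ℕ, S ⊆ Finset.Icc 1 M → n < S.card →
        modMI d M μb S ≤ modMI d M μb pa) ∧
    (0 < modMI d M μb pa →
      (∀ S : Finset ℕ, S ⊆ Finset.Icc 1 M → n < S.card →
          modMI d M μb S < modMI d M μb pa) ∧
      (∀ D : ℕ, 1 ≤ D → ∀ S : Finset ℕ, S ⊆ Finset.Icc 1 M → S.card ≤ D →
        (∀ S' : Finset ℕ, S' ⊆ Finset.Icc 1 M → S'.card ≤ D →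
            modMI d M μb S' ≤ modMI d M μb S) →
        S.card ≤ n)) := by
  have hd0 : 0 < d := by omega
  have hpa' : pa ⊆ Icc 1 M := fun s hs => mem_Icc.mpr (hpa s hs)
  have hfac := apply_snoc_eq_contextLaw_mul hd0 μb hunifset hnn hpa' hngram
  have hle : ∀ S ⊆ Icc 1 M, n < S.card →
      modMI d M μb S ≤ (1 / (d : ℝ)) ^ (S.card - n) * modMI d M μb pa := fun S hS hc =>
    hpacard ▸ modMI_le_pow_mul_modMI hd0 μb hunifset hnn hpa' hfac huniftok hS (by omega)
  have hr0 : (0 : ℝ) ≤ 1 / d := by positivity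
  have hr1 : 1 / (d : ℝ) < 1 := by
    rw [div_lt_one (by positivity)]
    exact_mod_cast hd
  have hlt : 0 < modMI d M μb pa → ∀ S ⊆ Icc 1 M, n < S.card →
      modMI d M μb S < modMI d M μb pa := fun hpos S hS hc =>
    (hle S hS hc).trans_lt (mul_lt_of_lt_one_left hpos (pow_lt_one₀ hr0 hr1 (by omega)))
  refine ⟨fun S hS hc => (hle S hS hc).trans
      (mul_le_of_le_one_left (modMI_nonneg μb huniftok pa) (pow_le_one₀ hr0 hr1.le)),
    fun hpos => ⟨hlt hpos, fun D _ S hS hSD hmax => ?_⟩⟩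
  by_contra! hc
  exact (hlt hpos S hS hc).not_ge (hmax pa hpa' (by omega))
end
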